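/- arXiv:2402.17850 — 14 statements merged into one kernel-verified Lean document; each statement's English description precedes it below -/
import Mathlib

section
/- Let α be a null curve in ℝ⁴₂ defined on an open interval I and write α' = (ξ₁, ξ₂, ξ₃, ξ₄). Assume ξ₁(t) − ξ₂(t) ≠ 0 for all t ∈ I. Then the functions f := (ξ₁ − ξ₂)/2, g := (ξ₄ − ξ₃)/(ξ₁ − ξ₂), h := (ξ₄ + ξ₃)/(ξ₁ − ξ₂) satisfy f(t) ≠ 0 for all t and α' = f·(gh + 1, gh − 1, h − g, h + g) on I; moreover (f, g, h) is the unique triple of functions with f nowhere zero for which this identity holds. -/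
noncomputable section

/-- The indefinite scalar product of `ℝ⁴₂`: `a·b = −a₁b₁ + a₂b₂ − a₃b₃ + a₄b₄`. -/
def dot42 (a b : Fin 4 → ℝ) : ℝ := -(a 0 * b 0) + a 1 * b 1 - a 2 * b 2 + a 3 * b 3

/-- Weierstrass-type representation of a null curve in ℝ⁴₂ with ξ₁ − ξ₂ ≠ 0:
existence and uniqueness of the generating triple (f, g, h). -/
theorem stmt_0 (I : Set ℝ) (hI : IsOpen I) (hIc : I.OrdConnected)
    (α : ℝ → Fin 4 → ℝ) (hα : ContDiffOn ℝ (⊤ : ℕ∞) α I)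
    (hnull : ∀ t ∈ I, dot42 (deriv α t) (deriv α t) = 0)
    (hξ : ∀ t ∈ I, deriv α t 0 - deriv α t 1 ≠ 0)
    (f g h : ℝ → ℝ)
    (hf : ∀ t ∈ I, f t = (deriv α t 0 - deriv α t 1) / 2)
    (hg : ∀ t ∈ I, g t = (deriv α t 3 - deriv α t 2) / (deriv α t 0 - deriv α t 1))
    (hh : ∀ t ∈ I, h t = (deriv α t 3 + deriv α t 2) / (deriv α t 0 - deriv α t 1)) :
    (∀ t ∈ I, f t ≠ 0) ∧
    (∀ t ∈ I, deriv α t =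
      f t • ![g t * h t + 1, g t * h t - 1, h t - g t, h t + g t]) ∧
    (∀ f' g' h' : ℝ → ℝ, (∀ t ∈ I, f' t ≠ 0) →
      (∀ t ∈ I, deriv α t =
        f' t • ![g' t * h' t + 1, g' t * h' t - 1, h' t - g' t, h' t + g' t]) →
      ∀ t ∈ I, f' t = f t ∧ g' t = g t ∧ h' t = h t) := by
  refine ⟨fun t ht => ?_, fun t ht => ?_, fun f' g' h' hf'ne hrep t ht => ?_⟩
  · rw [hf t ht]
    exact div_ne_zero (hξ t ht) two_ne_zero
  · have hd := hξ t ht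
    have hn := hnull t ht
    unfold dot42 at hn
    funext i
    fin_cases i <;>
      simp only [show (⟨0, by norm_num⟩ : Fin 4) = 0 from rfl,
        show (⟨1, by norm_num⟩ : Fin 4) = 1 from rfl,
        show (⟨2, by norm_num⟩ : Fin 4) = 2 from rfl,
        show (⟨3, by norm_num⟩ : Fin 4) = 3 from rfl,
        hf t ht, hg t ht, hh t ht, Pi.smul_apply, Matrix.smul_cons,
        smul_eq_mul, Matrix.smul_empty, Matrix.cons_val_zero, Matrix.cons_val_one,
        Matrix.head_cons, Matrix.cons_val_two, Matrix.tail_cons, Matrix.cons_val_three] <;>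
      field_simp
    · linear_combination (-1 : ℝ) * hn
    · linear_combination (-1 : ℝ) * hn
    · ring
    · ring
  · have hd := hξ t ht
    have hrep := hrep t ht
    have h0 := congrFun hrep 0
    have h1 := congrFun hrep 1
    have h2 := congrFun hrep 2
    have h3 := congrFun hrep 3
    simp only [Pi.smul_apply, Matrix.smul_cons, smul_eq_mul, Matrix.smul_empty,
      Matrix.cons_val_zero, Matrix.cons_val_one, Matrix.head_cons,
      Matrix.cons_val_two, Matrix.tail_cons, Matrix.cons_val_three] at h0 h1 h2 h3
    have hfne := hf'ne t ht
    have hfval : f' t = f t := by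
      rw [hf t ht]; linarith [h0, h1]
    refine ⟨hfval, ?_, ?_⟩
    · rw [hg t ht]
      rw [hfval, hf t ht] at h2 h3
      rw [eq_div_iff hd]
      linear_combination h2 - h3
    · rw [hh t ht]
      rw [hfval, hf t ht] at h2 h3
      rw [eq_div_iff hd]
      linear_combination -h3 - h2
end
end

section
/- Let α and α̂ be null curves in ℝ³₁ defined on a common open interval I whose derivatives have first coordinate minus second coordinate nowhere zero, and let (f, g) and (f̂, ĝ) be their respective Weierstrass data. Suppose α̂(t) = A·α(t) + v for all t ∈ I, where v ∈ ℝ³ and A is a 3×3 real matrix satisfying AᵀJA = J with J = diag(−1, 1, 1), det A = 1, and A₁₁ > 0 (a proper orthochronous motion of ℝ³₁). Then there exist real numbers a, b, c, d with ad − bc = 1 such that c·g(t) + d ≠ 0, f̂(t) = f(t)·(c·g(t) + d)², and ĝ(t) = (a·g(t) + b)/(c·g(t) + d) for all t ∈ I. -/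
noncomputable section

/-- The indefinite scalar product of `ℝ³₁`: `a·b = −a₁b₁ + a₂b₂ + a₃b₃`. -/
def dot31 (a b : Fin 3 → ℝ) : ℝ := -(a 0 * b 0) + a 1 * b 1 + a 2 * b 2

lemma sl2_exists (A00 A01 A02 A10 A11 A12 A20 A21 A22 : ℝ)
    (R00 : -(A00 * A00) + A01 * A01 + A02 * A02 = -1)
    (R01 : -(A00 * A10) + A01 * A11 + A02 * A12 = 0)
    (R02 : -(A00 * A20) + A01 * A21 + A02 * A22 = 0)
    (R11 : -(A10 * A10) + A11 * A11 + A12 * A12 = 1)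
    (R12 : -(A10 * A20) + A11 * A21 + A12 * A22 = 0)
    (cofa : A11 * A22 - A12 * A21 = A00)
    (cofb : A01 * A22 - A02 * A21 = A10)
    (cofc : A10 * A22 - A12 * A20 = A01)
    (cofd : A00 * A22 - A02 * A20 = A11)
    (cofe : A10 * A21 - A11 * A20 = -A02)
    (coff : A00 * A21 - A01 * A20 = -A12)
    (hd01 : A00 - A10 > 0) :
    ∃ a b c d : ℝ,
      c ^ 2 + d ^ 2 = A00 - A10 ∧
      c ^ 2 - d ^ 2 = A01 - A11 ∧
      2 * c * d = A02 - A12 ∧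
      2 * a * c = A20 + A21 ∧
      2 * b * d = A20 - A21 ∧
      2 * a * d = A22 + 1 ∧
      2 * b * c = A22 - 1 := by
  set r : ℝ := A00 - A10 + (A01 - A11) with hr_def
  set s : ℝ := A00 - A10 - (A01 - A11) with hs_def
  have hrs : (A02 - A12) ^ 2 = r * s := by
    rw [hr_def, hs_def]; linear_combination R00 + R11 - 2 * R01
  have hsum : r + s = 2 * (A00 - A10) := by rw [hr_def, hs_def]; ring
  have hrpos : 0 ≤ r ∧ 0 ≤ s := by
    constructor <;> nlinarith [sq_nonneg (A02 - A12)]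
  have E5 : (A22 - 1) * (A02 - A12) = r * (A20 - A21) := by
    rw [hr_def]; linear_combination R02 - R12 + coff - cofe
  have E6 : (A20 + A21) * (A02 - A12) = r * (A22 + 1) := by
    rw [hr_def]; linear_combination cofa - cofb + cofc - cofd
  have E4 : (A22 + 1) * (A02 - A12) = s * (A20 + A21) := by
    rw [hs_def]; linear_combination R02 - R12 - coff + cofe
  have E7 : (A20 - A21) * (A02 - A12) = s * (A22 - 1) := by
    rw [hs_def]; linear_combination -cofa + cofb + cofc - cofd
  rcases lt_or_ge 0 r with hr | hr
  · obtain ⟨c, hc2, hcpos⟩ : ∃ c : ℝ, c ^ 2 = r / 2 ∧ 0 < c :=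
      ⟨Real.sqrt (r / 2), Real.sq_sqrt (by linarith), Real.sqrt_pos.mpr (by linarith)⟩
    have hcne : c ≠ 0 := ne_of_gt hcpos
    have hd2 : ((A02 - A12) / (2 * c)) ^ 2 = s / 2 := by
      rw [div_pow, hrs, div_eq_iff (by positivity)]
      linear_combination -2 * s * hc2
    refine ⟨(A20 + A21) / (2 * c), (A22 - 1) / (2 * c), c, (A02 - A12) / (2 * c),
      ?_, ?_, ?_, ?_, ?_, ?_, ?_⟩
    · rw [hd2]; linarith [hc2]
    · rw [hd2]; linarith [hc2]
    · field_simp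
    · field_simp
    · rw [show (2:ℝ) * ((A22 - 1) / (2 * c)) * ((A02 - A12) / (2 * c)) =
          (2 * ((A22 - 1) * (A02 - A12))) / ((2 * c) * (2 * c)) from by ring,
        div_eq_iff (by positivity)]
      linear_combination 2 * E5 - 4 * (A20 - A21) * hc2
    · rw [show (2:ℝ) * ((A20 + A21) / (2 * c)) * ((A02 - A12) / (2 * c)) =
          (2 * ((A20 + A21) * (A02 - A12))) / ((2 * c) * (2 * c)) from by ring,
        div_eq_iff (by positivity)]
      linear_combination 2 * E6 - 4 * (A22 + 1) * hc2
    · field_simp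
  · have hs : 0 < s := by
      rcases eq_or_lt_of_le hrpos.2 with h | h
      · exfalso; nlinarith
      · exact h
    obtain ⟨d, hd2, hdpos⟩ : ∃ d : ℝ, d ^ 2 = s / 2 ∧ 0 < d :=
      ⟨Real.sqrt (s / 2), Real.sq_sqrt (by linarith), Real.sqrt_pos.mpr (by linarith)⟩
    have hdne : d ≠ 0 := ne_of_gt hdpos
    have hc2 : ((A02 - A12) / (2 * d)) ^ 2 = r / 2 := by
      rw [div_pow, hrs, div_eq_iff (by positivity)]
      linear_combination -2 * r * hd2
    refine ⟨(A22 + 1) / (2 * d), (A20 - A21) / (2 * d), (A02 - A12) / (2 * d), d,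
      ?_, ?_, ?_, ?_, ?_, ?_, ?_⟩
    · rw [hc2]; linarith [hd2]
    · rw [hc2]; linarith [hd2]
    · field_simp
    · rw [show (2:ℝ) * ((A22 + 1) / (2 * d)) * ((A02 - A12) / (2 * d)) =
          (2 * ((A22 + 1) * (A02 - A12))) / ((2 * d) * (2 * d)) from by ring,
        div_eq_iff (by positivity)]
      linear_combination 2 * E4 - 4 * (A20 + A21) * hd2
    · field_simp
    · field_simp
    · rw [show (2:ℝ) * ((A20 - A21) / (2 * d)) * ((A02 - A12) / (2 * d)) =
          (2 * ((A20 - A21) * (A02 - A12))) / ((2 * d) * (2 * d)) from by ring,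
        div_eq_iff (by positivity)]
      linear_combination 2 * E7 - 4 * (A22 - 1) * hd2

/-- If two null curves in ℝ³₁ are related by a proper orthochronous motion, then their
Weierstrass data are related by a linear-fractional transformation of determinant 1. -/
theorem stmt_4 (I : Set ℝ) (hI : IsOpen I) (hIc : I.OrdConnected)
    (α αh : ℝ → Fin 3 → ℝ)
    (hα : ContDiffOn ℝ (⊤ : ℕ∞) α I) (hαh : ContDiffOn ℝ (⊤ : ℕ∞) αh I)
    (hnull : ∀ t ∈ I, dot31 (deriv α t) (deriv α t) = 0)
    (hnullh : ∀ t ∈ I, dot31 (deriv αh t) (deriv αh t) = 0)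
    (hξ : ∀ t ∈ I, deriv α t 0 - deriv α t 1 ≠ 0)
    (hξh : ∀ t ∈ I, deriv αh t 0 - deriv αh t 1 ≠ 0)
    (f g fh gh : ℝ → ℝ)
    (hf : ∀ t ∈ I, f t = (deriv α t 0 - deriv α t 1) / 2)
    (hg : ∀ t ∈ I, g t = deriv α t 2 / (deriv α t 0 - deriv α t 1))
    (hfh : ∀ t ∈ I, fh t = (deriv αh t 0 - deriv αh t 1) / 2)
    (hgh : ∀ t ∈ I, gh t = deriv αh t 2 / (deriv αh t 0 - deriv αh t 1))
    (A : Matrix (Fin 3) (Fin 3) ℝ) (v : Fin 3 → ℝ)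
    (hA : A.transpose * Matrix.diagonal ![(-1 : ℝ), 1, 1] * A =
      Matrix.diagonal ![(-1 : ℝ), 1, 1])
    (hdet : A.det = 1) (hor : A 0 0 > 0)
    (hmove : ∀ t ∈ I, αh t = A.mulVec (α t) + v) :
    ∃ a b c d : ℝ, a * d - b * c = 1 ∧
      ∀ t ∈ I, c * g t + d ≠ 0 ∧ fh t = f t * (c * g t + d) ^ 2 ∧
        gh t = (a * g t + b) / (c * g t + d) := by
  set J : Matrix (Fin 3) (Fin 3) ℝ := Matrix.diagonal ![(-1 : ℝ), 1, 1] with hJ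
  have hJJ : J * J = 1 := by
    ext i j
    fin_cases i <;> fin_cases j <;>
      simp [hJ, Matrix.mul_apply, Fin.sum_univ_three, Matrix.one_apply]
  have hL : (J * A.transpose * J) * A = 1 := by
    have h1 : J * (A.transpose * J * A) = J * J := by rw [hA]
    rw [hJJ] at h1; rw [← h1]; noncomm_ring
  have hR : A * (J * A.transpose * J) = 1 := mul_eq_one_comm.mp hL
  have hAJAT : A * J * A.transpose = J := by
    have h2 : (A * (J * A.transpose * J)) * J = 1 * J := by rw [hR]
    rw [one_mul] at h2
    calc A * J * A.transpose = (A * (J * A.transpose * J)) * J := by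
          rw [show (A * (J * A.transpose * J)) * J = A * J * A.transpose * (J * J) by
            noncomm_ring, hJJ, mul_one]
      _ = J := h2
  have hadj : A.adjugate = J * A.transpose * J := by
    have h2 : A.adjugate * (A * (J * A.transpose * J)) = A.adjugate := by rw [hR, mul_one]
    rw [← mul_assoc, Matrix.adjugate_mul, hdet, one_smul, one_mul] at h2
    exact h2.symm
  have C00 : -(A 0 0 * A 0 0) + A 1 0 * A 1 0 + A 2 0 * A 2 0 = -1 := by
    have := congrFun (congrFun hA 0) 0
    simp [hJ, Matrix.mul_apply, Fin.sum_univ_three] at this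
    linarith
  have R00 : -(A 0 0 * A 0 0) + A 0 1 * A 0 1 + A 0 2 * A 0 2 = -1 := by
    have := congrFun (congrFun hAJAT 0) 0
    simp [hJ, Matrix.mul_apply, Fin.sum_univ_three] at this
    linarith
  have R01 : -(A 0 0 * A 1 0) + A 0 1 * A 1 1 + A 0 2 * A 1 2 = 0 := by
    have := congrFun (congrFun hAJAT 0) 1
    simp [hJ, Matrix.mul_apply, Fin.sum_univ_three] at this
    linarith
  have R02 : -(A 0 0 * A 2 0) + A 0 1 * A 2 1 + A 0 2 * A 2 2 = 0 := by
    have := congrFun (congrFun hAJAT 0) 2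
    simp [hJ, Matrix.mul_apply, Fin.sum_univ_three] at this
    linarith
  have R11 : -(A 1 0 * A 1 0) + A 1 1 * A 1 1 + A 1 2 * A 1 2 = 1 := by
    have := congrFun (congrFun hAJAT 1) 1
    simp [hJ, Matrix.mul_apply, Fin.sum_univ_three] at this
    linarith
  have R12 : -(A 1 0 * A 2 0) + A 1 1 * A 2 1 + A 1 2 * A 2 2 = 0 := by
    have := congrFun (congrFun hAJAT 1) 2
    simp [hJ, Matrix.mul_apply, Fin.sum_univ_three] at this
    linarith
  have cofa : A 1 1 * A 2 2 - A 1 2 * A 2 1 = A 0 0 := by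
    have := congrFun (congrFun hadj 0) 0
    simp [Matrix.adjugate_fin_three, hJ, Matrix.mul_apply, Fin.sum_univ_three] at this
    linarith
  have cofb : A 0 1 * A 2 2 - A 0 2 * A 2 1 = A 1 0 := by
    have := congrFun (congrFun hadj 0) 1
    simp [Matrix.adjugate_fin_three, hJ, Matrix.mul_apply, Fin.sum_univ_three] at this
    linarith
  have cofc : A 1 0 * A 2 2 - A 1 2 * A 2 0 = A 0 1 := by
    have := congrFun (congrFun hadj 1) 0
    simp [Matrix.adjugate_fin_three, hJ, Matrix.mul_apply, Fin.sum_univ_three] at this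
    linarith
  have cofd : A 0 0 * A 2 2 - A 0 2 * A 2 0 = A 1 1 := by
    have := congrFun (congrFun hadj 1) 1
    simp [Matrix.adjugate_fin_three, hJ, Matrix.mul_apply, Fin.sum_univ_three] at this
    linarith
  have cofe : A 1 0 * A 2 1 - A 1 1 * A 2 0 = -(A 0 2) := by
    have := congrFun (congrFun hadj 2) 0
    simp [Matrix.adjugate_fin_three, hJ, Matrix.mul_apply, Fin.sum_univ_three] at this
    linarith
  have coff : A 0 0 * A 2 1 - A 0 1 * A 2 0 = -(A 1 2) := by
    have := congrFun (congrFun hadj 2) 1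
    simp [Matrix.adjugate_fin_three, hJ, Matrix.mul_apply, Fin.sum_univ_three] at this
    linarith
  have hd01 : A 0 0 - A 1 0 > 0 := by
    nlinarith [sq_nonneg (A 2 0), sq_nonneg (A 0 0 + A 1 0), sq_nonneg (A 0 0 - A 1 0)]
  obtain ⟨a, b, c, d, I1, I2, I3, I4, I5, I6, I7⟩ :=
    sl2_exists (A 0 0) (A 0 1) (A 0 2) (A 1 0) (A 1 1) (A 1 2) (A 2 0) (A 2 1) (A 2 2)
      R00 R01 R02 R11 R12 cofa cofb cofc cofd cofe coff hd01
  have hderiv : ∀ t ∈ I, deriv αh t = A.mulVec (deriv α t) := by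
    intro t ht
    have hmem : I ∈ nhds t := hI.mem_nhds ht
    have hdα : DifferentiableAt ℝ α t :=
      (hα.contDiffAt hmem).differentiableAt (by simp)
    have h1 : HasDerivAt α (deriv α t) t := hdα.hasDerivAt
    let L : (Fin 3 → ℝ) →L[ℝ] (Fin 3 → ℝ) :=
      LinearMap.toContinuousLinearMap (Matrix.mulVecLin A)
    have h2 : HasDerivAt (fun s => A.mulVec (α s) + v) (A.mulVec (deriv α t)) t := by
      have h3 := (L.hasFDerivAt.comp_hasDerivAt t h1).add_const v
      simpa [L, Function.comp] using h3
    have h4 : HasDerivAt αh (A.mulVec (deriv α t)) t :=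
      h2.congr_of_eventuallyEq (Filter.eventually_of_mem hmem hmove)
    exact h4.deriv
  refine ⟨a, b, c, d, by linear_combination I6 / 2 - I7 / 2, ?_⟩
  intro t ht
  have hD : deriv αh t = A.mulVec (deriv α t) := hderiv t ht
  have hn : -(deriv α t 0 * deriv α t 0) + deriv α t 1 * deriv α t 1
      + deriv α t 2 * deriv α t 2 = 0 := hnull t ht
  have hx : deriv α t 0 - deriv α t 1 ≠ 0 := hξ t ht
  have hXne : deriv αh t 0 - deriv αh t 1 ≠ 0 := hξh t ht
  have E0 : deriv αh t 0 =
      A 0 0 * deriv α t 0 + A 0 1 * deriv α t 1 + A 0 2 * deriv α t 2 := by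
    rw [hD]; simp [Matrix.mulVec, dotProduct, Fin.sum_univ_three]
  have E1 : deriv αh t 1 =
      A 1 0 * deriv α t 0 + A 1 1 * deriv α t 1 + A 1 2 * deriv α t 2 := by
    rw [hD]; simp [Matrix.mulVec, dotProduct, Fin.sum_univ_three]
  have E2 : deriv αh t 2 =
      A 2 0 * deriv α t 0 + A 2 1 * deriv α t 1 + A 2 2 * deriv α t 2 := by
    rw [hD]; simp [Matrix.mulVec, dotProduct, Fin.sum_univ_three]
  obtain ⟨x0, hx0⟩ : ∃ y : ℝ, y = deriv α t 0 := ⟨_, rfl⟩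
  obtain ⟨x1, hx1⟩ : ∃ y : ℝ, y = deriv α t 1 := ⟨_, rfl⟩
  obtain ⟨x2, hx2⟩ : ∃ y : ℝ, y = deriv α t 2 := ⟨_, rfl⟩
  rw [← hx0, ← hx1, ← hx2] at hn E0 E1 E2
  rw [← hx0, ← hx1] at hx
  have hgt : g t = x2 / (x0 - x1) := by
    rw [hg t ht, ← hx0, ← hx1, ← hx2]
  have key1 : (deriv αh t 0 - deriv αh t 1) * (x0 - x1)
      = (c * x2 + d * (x0 - x1)) ^ 2 := by
    rw [E0, E1]
    linear_combination (-(c ^ 2)) * hn + (-(x0 * (x0 - x1))) * I1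
      + (-(x1 * (x0 - x1))) * I2 + (-(x2 * (x0 - x1))) * I3
  have key2 : deriv αh t 2 * (x0 - x1)
      = (a * x2 + b * (x0 - x1)) * (c * x2 + d * (x0 - x1)) := by
    rw [E2]
    linear_combination (-(a * c)) * hn
      + (-(x0 * (x0 - x1) / 2) - x1 * (x0 - x1) / 2) * I4
      + (-(x0 * (x0 - x1) / 2) + x1 * (x0 - x1) / 2) * I5
      + (-(x2 * (x0 - x1) / 2)) * I6 + (-(x2 * (x0 - x1) / 2)) * I7
  have hmul : (c * g t + d) * (x0 - x1) = c * x2 + d * (x0 - x1) := by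
    rw [hgt]; field_simp
  have hmul2 : (a * g t + b) * (x0 - x1) = a * x2 + b * (x0 - x1) := by
    rw [hgt]; field_simp
  have hX01 : deriv αh t 0 - deriv αh t 1 = (x0 - x1) * (c * g t + d) ^ 2 := by
    apply mul_right_cancel₀ hx
    rw [key1]
    linear_combination
      (-(c * x2 + d * (x0 - x1) + (c * g t + d) * (x0 - x1))) * hmul
  have hcgd : c * g t + d ≠ 0 := by
    intro h
    apply hXne
    rw [hX01, h]; ring
  have hX2 : deriv αh t 2 = (x0 - x1) * ((a * g t + b) * (c * g t + d)) := by
    apply mul_right_cancel₀ hx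
    rw [key2]
    linear_combination (-(c * x2 + d * (x0 - x1))) * hmul2
      + (-((a * g t + b) * (x0 - x1))) * hmul
  refine ⟨hcgd, ?_, ?_⟩
  · rw [hfh t ht, hf t ht, ← hx0, ← hx1, hX01]; ring
  · rw [hgh t ht, hX2, hX01]
    field_simp
end
end

section
/- Let α and α̂ be null curves in ℝ³₁ defined on a common open interval I whose derivatives have first coordinate minus second coordinate nowhere zero, and let (f, g) and (f̂, ĝ) be their respective Weierstrass data. Suppose there exist real numbers a, b, c, d with ad − bc = 1 such that c·g(t) + d ≠ 0, f̂(t) = f(t)·(c·g(t) + d)², and ĝ(t) = (a·g(t) + b)/(c·g(t) + d) for all t ∈ I. Then there exist a 3×3 real matrix A satisfying AᵀJA = J with J = diag(−1, 1, 1), det A = 1 and A₁₁ > 0, and a vector v ∈ ℝ³, such that α̂(t) = A·α(t) + v for all t ∈ I. -/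
noncomputable section

private lemma alg_core (a b c d p0 p1 p2 q0 q1 q2 : ℝ)
    (hu : p0 - p1 ≠ 0) (hw : q0 - q1 ≠ 0)
    (hp : p2 ^ 2 = p0 ^ 2 - p1 ^ 2) (hq : q2 ^ 2 = q0 ^ 2 - q1 ^ 2)
    (r1 : c * (p2 / (p0 - p1)) + d ≠ 0)
    (r2 : (q0 - q1) / 2 = (p0 - p1) / 2 * (c * (p2 / (p0 - p1)) + d) ^ 2)
    (r3 : q2 / (q0 - q1) = (a * (p2 / (p0 - p1)) + b) / (c * (p2 / (p0 - p1)) + d)) :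
    q0 = (a^2+b^2+c^2+d^2)/2 * p0 + (a^2+c^2-b^2-d^2)/2 * p1 + (a*b+c*d) * p2
    ∧ q1 = (a^2+b^2-c^2-d^2)/2 * p0 + (a^2-b^2-c^2+d^2)/2 * p1 + (a*b-c*d) * p2
    ∧ q2 = (a*c+b*d) * p0 + (a*c-b*d) * p1 + (a*d+b*c) * p2 := by
  have hs : c * p2 + d * (p0 - p1) ≠ 0 := by
    intro h0
    apply r1
    have : c * (p2 / (p0 - p1)) + d = (c * p2 + d * (p0 - p1)) / (p0 - p1) := by
      field_simp
    rw [this, h0, zero_div]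
  have h1 : (q0 - q1) * (p0 - p1) = (c * p2 + d * (p0 - p1)) ^ 2 := by
    field_simp at r2
    apply mul_left_cancel₀ hu
    linear_combination (p0 - p1) * r2
  have h2' : q2 * (c * p2 + d * (p0 - p1)) = (q0 - q1) * (a * p2 + b * (p0 - p1)) := by
    field_simp at r3
    have hs' : p2 * c + (p0 - p1) * d ≠ 0 := by intro h; apply hs; linear_combination h
    rw [r3, div_mul_eq_mul_div, div_eq_iff hs']; ring
  have h2 : q2 * (p0 - p1) = (c * p2 + d * (p0 - p1)) * (a * p2 + b * (p0 - p1)) := by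
    apply mul_left_cancel₀ hs
    linear_combination (p0 - p1) * h2' + (a * p2 + b * (p0 - p1)) * h1
  have h3 : (q0 + q1) * (p0 - p1) = (a * p2 + b * (p0 - p1)) ^ 2 := by
    apply mul_left_cancel₀ (mul_ne_zero hw hu)
    linear_combination (-(p0 - p1)^2) * hq + (q2 * (p0 - p1) + (c * p2 + d * (p0 - p1)) * (a * p2 + b * (p0 - p1))) * h2 - (a * p2 + b * (p0 - p1))^2 * h1
  have h2u : (2 : ℝ) * (p0 - p1) ≠ 0 := mul_ne_zero two_ne_zero hu
  refine ⟨?_, ?_, ?_⟩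
  · apply mul_left_cancel₀ h2u
    linear_combination h1 + h3 + (a^2 + c^2) * hp
  · apply mul_left_cancel₀ h2u
    linear_combination h3 - h1 + (a^2 - c^2) * hp
  · apply mul_left_cancel₀ hu
    linear_combination h2 + (a*c) * hp

/-- If the Weierstrass data of two null curves in ℝ³₁ are related by a linear-fractional
transformation of determinant 1, then the curves are related by a proper orthochronous
motion of ℝ³₁. -/
theorem stmt_5 (I : Set ℝ) (hI : IsOpen I) (hIc : I.OrdConnected)
    (α αh : ℝ → Fin 3 → ℝ)
    (hα : ContDiffOn ℝ (⊤ : ℕ∞) α I) (hαh : ContDiffOn ℝ (⊤ : ℕ∞) αh I)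
    (hnull : ∀ t ∈ I, dot31 (deriv α t) (deriv α t) = 0)
    (hnullh : ∀ t ∈ I, dot31 (deriv αh t) (deriv αh t) = 0)
    (hξ : ∀ t ∈ I, deriv α t 0 - deriv α t 1 ≠ 0)
    (hξh : ∀ t ∈ I, deriv αh t 0 - deriv αh t 1 ≠ 0)
    (f g fh gh : ℝ → ℝ)
    (hf : ∀ t ∈ I, f t = (deriv α t 0 - deriv α t 1) / 2)
    (hg : ∀ t ∈ I, g t = deriv α t 2 / (deriv α t 0 - deriv α t 1))
    (hfh : ∀ t ∈ I, fh t = (deriv αh t 0 - deriv αh t 1) / 2)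
    (hgh : ∀ t ∈ I, gh t = deriv αh t 2 / (deriv αh t 0 - deriv αh t 1))
    (a b c d : ℝ) (habcd : a * d - b * c = 1)
    (hrel : ∀ t ∈ I, c * g t + d ≠ 0 ∧ fh t = f t * (c * g t + d) ^ 2 ∧
      gh t = (a * g t + b) / (c * g t + d)) :
    ∃ (A : Matrix (Fin 3) (Fin 3) ℝ) (v : Fin 3 → ℝ),
      A.transpose * Matrix.diagonal ![(-1 : ℝ), 1, 1] * A =
        Matrix.diagonal ![(-1 : ℝ), 1, 1] ∧
      A.det = 1 ∧ A 0 0 > 0 ∧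
      ∀ t ∈ I, αh t = A.mulVec (α t) + v := by
  set A : Matrix (Fin 3) (Fin 3) ℝ :=
    !![(a^2+b^2+c^2+d^2)/2, (a^2+c^2-b^2-d^2)/2, a*b+c*d;
       (a^2+b^2-c^2-d^2)/2, (a^2-b^2-c^2+d^2)/2, a*b-c*d;
       a*c+b*d, a*c-b*d, a*d+b*c] with hAdef
  -- the three matrix conditions
  have hJ : Matrix.diagonal ![(-1 : ℝ), 1, 1] = !![(-1:ℝ),0,0;0,1,0;0,0,1] := by
    ext i j; fin_cases i <;> fin_cases j <;> rfl
  have hAT : A.transpose =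
      !![(a^2+b^2+c^2+d^2)/2, (a^2+b^2-c^2-d^2)/2, a*c+b*d;
         (a^2+c^2-b^2-d^2)/2, (a^2-b^2-c^2+d^2)/2, a*c-b*d;
         a*b+c*d, a*b-c*d, a*d+b*c] := by
    rw [hAdef]; ext i j; fin_cases i <;> fin_cases j <;> rfl
  have cond1 : A.transpose * Matrix.diagonal ![(-1 : ℝ), 1, 1] * A =
      Matrix.diagonal ![(-1 : ℝ), 1, 1] := by
    rw [hJ, hAT, hAdef, Matrix.mul_fin_three, Matrix.mul_fin_three]
    refine congrArg Matrix.of (Matrix.vec3_eq (Matrix.vec3_eq ?_ ?_ ?_)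
      (Matrix.vec3_eq ?_ ?_ ?_) (Matrix.vec3_eq ?_ ?_ ?_))
    · linear_combination (-(a*d-b*c)-1) * habcd
    · ring
    · ring
    · ring
    · linear_combination (a*d-b*c+1) * habcd
    · ring
    · ring
    · ring
    · linear_combination (a*d-b*c+1) * habcd
  have cond2 : A.det = 1 := by
    rw [hAdef, Matrix.det_fin_three]
    show ((a^2+b^2+c^2+d^2)/2) * ((a^2-b^2-c^2+d^2)/2) * (a*d+b*c)
        - ((a^2+b^2+c^2+d^2)/2) * (a*b-c*d) * (a*c-b*d)
        - ((a^2+c^2-b^2-d^2)/2) * ((a^2+b^2-c^2-d^2)/2) * (a*d+b*c)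
        + ((a^2+c^2-b^2-d^2)/2) * (a*b-c*d) * (a*c+b*d)
        + (a*b+c*d) * ((a^2+b^2-c^2-d^2)/2) * (a*c-b*d)
        - (a*b+c*d) * ((a^2-b^2-c^2+d^2)/2) * (a*c+b*d) = 1
    linear_combination ((a*d - b*c)^2 + (a*d - b*c) + 1) * habcd
  have cond3 : A 0 0 > 0 := by
    show (a^2+b^2+c^2+d^2)/2 > 0
    nlinarith [sq_nonneg (a - d), sq_nonneg (b + c)]
  -- key pointwise derivative identity
  have key : ∀ t ∈ I, deriv αh t = A.mulVec (deriv α t) := by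
    intro t ht
    obtain ⟨r1, r2, r3⟩ := hrel t ht
    rw [hg t ht] at r1 r3
    rw [hg t ht, hf t ht, hfh t ht] at r2
    rw [hgh t ht] at r3
    have hp : deriv α t 2 ^ 2 = deriv α t 0 ^ 2 - deriv α t 1 ^ 2 := by
      have h := hnull t ht; unfold dot31 at h; linear_combination h
    have hq : deriv αh t 2 ^ 2 = deriv αh t 0 ^ 2 - deriv αh t 1 ^ 2 := by
      have h := hnullh t ht; unfold dot31 at h; linear_combination h
    obtain ⟨e0, e1, e2⟩ := alg_core a b c d (deriv α t 0) (deriv α t 1) (deriv α t 2)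
      (deriv αh t 0) (deriv αh t 1) (deriv αh t 2) (hξ t ht) (hξh t ht) hp hq r1 r2 r3
    funext i
    fin_cases i
    · show deriv αh t 0 = A.mulVec (deriv α t) 0
      rw [hAdef]
      simp [Matrix.mulVec, dotProduct, Fin.sum_univ_three]
      exact e0.trans (by ring)
    · show deriv αh t 1 = A.mulVec (deriv α t) 1
      rw [hAdef]
      simp [Matrix.mulVec, dotProduct, Fin.sum_univ_three]
      exact e1.trans (by ring)
    · show deriv αh t 2 = A.mulVec (deriv α t) 2
      rw [hAdef]
      simp [Matrix.mulVec, dotProduct, Fin.sum_univ_three]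
      exact e2.trans (by ring)
  -- the translation vector
  rcases Set.eq_empty_or_nonempty I with hIe | ⟨t0, ht0⟩
  · exact ⟨A, 0, cond1, cond2, cond3, fun t ht => absurd ht (by simp [hIe])⟩
  set L : (Fin 3 → ℝ) →L[ℝ] (Fin 3 → ℝ) :=
    LinearMap.toContinuousLinearMap (Matrix.mulVecLin A) with hL
  have hLapp : ∀ x, L x = A.mulVec x := fun x => rfl
  set β : ℝ → Fin 3 → ℝ := fun t => αh t - L (α t) with hβdef
  have hβ : ∀ t ∈ I, HasDerivAt β 0 t := by
    intro t ht
    have h1 : HasDerivAt αh (deriv αh t) t :=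
      (((hαh.contDiffAt (hI.mem_nhds ht)).differentiableAt (by simp))).hasDerivAt
    have h2 : HasDerivAt α (deriv α t) t :=
      (((hα.contDiffAt (hI.mem_nhds ht)).differentiableAt (by simp))).hasDerivAt
    have h3 : HasDerivAt (fun s => L (α s)) (L (deriv α t)) t :=
      L.hasFDerivAt.comp_hasDerivAt t h2
    have h4 := h1.sub h3
    have : deriv αh t - L (deriv α t) = 0 := by
      rw [hLapp, key t ht]; simp
    rwa [this] at h4
  have hdiff : DifferentiableOn ℝ β I := fun t ht =>
    ((hβ t ht).differentiableAt).differentiableWithinAt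
  have hfd : ∀ x ∈ I, fderivWithin ℝ β I x = 0 := by
    intro x hx
    rw [fderivWithin_of_isOpen hI hx]
    have h := (hβ x hx).hasFDerivAt
    rw [h.fderiv]
    ext y
    simp
  have hconst : ∀ t ∈ I, β t = β t0 := fun t ht =>
    (hIc.convex (𝕜 := ℝ)).is_const_of_fderivWithin_eq_zero hdiff hfd ht ht0
  refine ⟨A, β t0, cond1, cond2, cond3, fun t ht => ?_⟩
  have h := hconst t ht
  rw [hβdef] at h
  simp only at h
  have : αh t - L (α t) = β t0 := h
  rw [sub_eq_iff_eq_add] at this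
  rw [this, hLapp]
  abel
end
end

section
/- Let α and α̂ be null curves in ℝ³₁ defined on a common open interval I whose derivatives have first coordinate minus second coordinate nowhere zero, with Weierstrass data (f, g) and (f̂, ĝ). Suppose α̂(t) = A·α(t) + v for all t ∈ I, where v ∈ ℝ³ and A is any 3×3 real matrix with AᵀJA = J, J = diag(−1, 1, 1) (such a matrix automatically satisfies A₁₁² ≥ 1, so ε := sign(A₁₁) ∈ {1, −1} is well defined). Then there exist real numbers a, b, c, d with ad − bc = ε·det A such that c·g(t) + d ≠ 0, f̂(t) = ε·f(t)·(c·g(t) + d)², and ĝ(t) = (a·g(t) + b)/(c·g(t) + d) for all t ∈ I. -/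
noncomputable section

lemma key_sqrt (P Q R P' Q' R' S T U : ℝ)
    (h1 : 4*P*R = Q^2)
    (h3 : P*R' + R*P' - Q*Q'/2 = 4)
    (h4 : 2*(S*R + U*P) = T*Q)
    (h6 : T^2 - 4*S*U = 4)
    (h7 : T^2 - Q*Q' = 4)
    (h8 : S^2 = P*P')
    (h9 : U^2 = R*R')
    (h10 : P*Q' + P'*Q = 2*S*T)
    (h11 : R*Q' + R'*Q = 2*U*T)
    (hsum : 0 < P + R) :
    ∃ a b c d : ℝ, P = 2*c^2 ∧ Q = 4*c*d ∧ R = 2*d^2 ∧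
      P' = 2*a^2 ∧ Q' = 4*a*b ∧ R' = 2*b^2 ∧
      S = 2*a*c ∧ T = 2*(a*d + b*c) ∧ U = 2*b*d := by
  have hP0 : 0 ≤ P := by nlinarith [sq_nonneg Q]
  have hR0 : 0 ≤ R := by nlinarith [sq_nonneg Q]
  by_cases hP : P = 0
  · have hQ : Q = 0 := by
      have h : Q^2 = 0 := by nlinarith
      exact pow_eq_zero_iff two_ne_zero |>.mp h
    have hS : S = 0 := by
      have h : S^2 = 0 := by rw [h8, hP]; ring
      exact pow_eq_zero_iff two_ne_zero |>.mp h
    have hRpos : 0 < R := by nlinarith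
    have hRP : R * P' = 4 := by linear_combination h3 - R'*hP + (Q'/2)*hQ
    have hT2 : T^2 = 4 := by linear_combination h7 + Q'*hQ
    set d := Real.sqrt (R/2) with hdd
    have hd2 : d^2 = R/2 := Real.sq_sqrt (by linarith)
    have hdpos : 0 < d := Real.sqrt_pos.mpr (by linarith)
    have hdne : d ≠ 0 := ne_of_gt hdpos
    obtain ⟨a, ha⟩ : ∃ x : ℝ, 2*d*x = T := ⟨T/(2*d), by field_simp⟩
    obtain ⟨b, hb⟩ : ∃ x : ℝ, 2*d*x = U := ⟨U/(2*d), by field_simp⟩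
    have hd2pos : (0:ℝ) < d^2 := pow_pos hdpos 2
    refine ⟨a, b, 0, d, by linear_combination hP, by linear_combination hQ,
      by linear_combination -2*hd2, ?_, ?_, ?_, by linear_combination hS,
      by linear_combination -ha, by linear_combination -hb⟩
    · refine mul_left_cancel₀ (show (2:ℝ)*d^2 ≠ 0 from ne_of_gt (by linarith)) ?_
      linear_combination 2*P'*hd2 + hRP - (2*d*a+T)*ha - hT2
    · refine mul_left_cancel₀ (show (4:ℝ)*d^2 ≠ 0 from ne_of_gt (by linarith)) ?_
      linear_combination (-8*d*b)*ha - 4*T*hb + 4*Q'*hd2 + 2*h11 - 2*R'*hQ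
    · refine mul_left_cancel₀ (show (2:ℝ)*d^2 ≠ 0 from ne_of_gt (by linarith)) ?_
      linear_combination -(2*d*b+U)*hb + 2*R'*hd2 - h9
  · have hPpos : 0 < P := lt_of_le_of_ne hP0 (Ne.symm hP)
    set c := Real.sqrt (P/2) with hcc
    have hc2 : c^2 = P/2 := Real.sq_sqrt (by linarith)
    have hcpos : 0 < c := Real.sqrt_pos.mpr (by linarith)
    have hcn : c ≠ 0 := ne_of_gt hcpos
    have hc2pos : (0:ℝ) < c^2 := pow_pos hcpos 2
    have hPc2 : (0:ℝ) < P*c^2 := mul_pos hPpos hc2pos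
    have hPc : (0:ℝ) < P*c := mul_pos hPpos hcpos
    have hP2c2 : (0:ℝ) < P^2*c^2 := mul_pos (pow_pos hPpos 2) hc2pos
    obtain ⟨d, hd⟩ : ∃ x : ℝ, 4*c*x = Q := ⟨Q/(4*c), by field_simp⟩
    obtain ⟨a, ha⟩ : ∃ x : ℝ, 2*c*x = S := ⟨S/(2*c), by field_simp⟩
    obtain ⟨b, hb⟩ : ∃ x : ℝ, 4*P*c*x = 2*P*T - S*Q :=
      ⟨(2*P*T - S*Q)/(4*P*c), by field_simp⟩
    refine ⟨a, b, c, d, by linear_combination -2*hc2, hd.symm, ?_, ?_, ?_, ?_,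
      by linear_combination -ha, ?_, ?_⟩
    · refine mul_left_cancel₀ (show (4:ℝ)*P ≠ 0 from ne_of_gt (by linarith)) ?_
      linear_combination h1 - (4*c*d+Q)*hd + 16*d^2*hc2
    · refine mul_left_cancel₀ (show (2:ℝ)*P ≠ 0 from ne_of_gt (by linarith)) ?_
      linear_combination -2*h8 - 2*(2*c*a+S)*ha + 8*a^2*hc2
    · refine mul_left_cancel₀ (show (8:ℝ)*(P*c^2) ≠ 0 from ne_of_gt (by linarith)) ?_
      linear_combination (-8*c*a)*hb + (4*Q*S - 8*P*T)*ha + 4*Q*h8 + 4*P*h10 + 8*P*Q'*hc2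
    · refine mul_left_cancel₀ (show (16:ℝ)*(P^2*c^2) ≠ 0 from ne_of_gt (by linarith)) ?_
      linear_combination (-2)*(4*P*c*b + 2*P*T - S*Q)*hb + 16*P^2*R'*hc2 + (-8*P*S)*h4
        + (16*P*R - 2*Q^2)*h8 + 2*P*P'*h1 + 8*P^2*h3 + (-4*P^2)*h6 + (-4*P^2)*h7
    · refine mul_left_cancel₀ (show (4:ℝ)*(P*c) ≠ 0 from ne_of_gt (by linarith)) ?_
      linear_combination -2*c*hb - 4*P*d*ha - 2*S*c*hd + 8*S*d*hc2
    · refine mul_left_cancel₀ (show (8:ℝ)*(P*c^2) ≠ 0 from ne_of_gt (by linarith)) ?_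
      linear_combination (-4*c*d)*hb + (S*Q - 2*P*T)*hd + 2*P*h4 - S*h1 + 8*P*U*hc2

set_option maxHeartbeats 1600000 in
/-- If two null curves in ℝ³₁ are related by an arbitrary motion x ↦ Ax + v of ℝ³₁
(with ε the sign of A₁₁, which satisfies A₁₁² ≥ 1), then their Weierstrass data are
related by a linear-fractional transformation of determinant ε·det A, with an
additional factor ε in the transformation of f. -/
theorem stmt_6 (I : Set ℝ) (hI : IsOpen I) (hIc : I.OrdConnected)
    (α αh : ℝ → Fin 3 → ℝ)
    (hα : ContDiffOn ℝ (⊤ : ℕ∞) α I) (hαh : ContDiffOn ℝ (⊤ : ℕ∞) αh I)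
    (hnull : ∀ t ∈ I, dot31 (deriv α t) (deriv α t) = 0)
    (hnullh : ∀ t ∈ I, dot31 (deriv αh t) (deriv αh t) = 0)
    (hξ : ∀ t ∈ I, deriv α t 0 - deriv α t 1 ≠ 0)
    (hξh : ∀ t ∈ I, deriv αh t 0 - deriv αh t 1 ≠ 0)
    (f g fh gh : ℝ → ℝ)
    (hf : ∀ t ∈ I, f t = (deriv α t 0 - deriv α t 1) / 2)
    (hg : ∀ t ∈ I, g t = deriv α t 2 / (deriv α t 0 - deriv α t 1))
    (hfh : ∀ t ∈ I, fh t = (deriv αh t 0 - deriv αh t 1) / 2)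
    (hgh : ∀ t ∈ I, gh t = deriv αh t 2 / (deriv αh t 0 - deriv αh t 1))
    (A : Matrix (Fin 3) (Fin 3) ℝ) (v : Fin 3 → ℝ)
    (hA : A.transpose * Matrix.diagonal ![(-1 : ℝ), 1, 1] * A =
      Matrix.diagonal ![(-1 : ℝ), 1, 1])
    (hmove : ∀ t ∈ I, αh t = A.mulVec (α t) + v)
    (ε : ℝ) (hε : (A 0 0 > 0 ∧ ε = 1) ∨ (A 0 0 < 0 ∧ ε = -1)) :
    A 0 0 ^ 2 ≥ 1 ∧
    ∃ a b c d : ℝ, a * d - b * c = ε * A.det ∧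
      ∀ t ∈ I, c * g t + d ≠ 0 ∧ fh t = ε * f t * (c * g t + d) ^ 2 ∧
        gh t = (a * g t + b) / (c * g t + d) := by
  -- matrix consequences
  have hrow : A * Matrix.diagonal ![(-1 : ℝ), 1, 1] * A.transpose =
      Matrix.diagonal ![(-1 : ℝ), 1, 1] := by
    set J : Matrix (Fin 3) (Fin 3) ℝ := Matrix.diagonal ![(-1 : ℝ), 1, 1] with hJ
    have hJJ : J * J = 1 := by
      ext i j
      fin_cases i <;> fin_cases j <;>
        simp [hJ, Matrix.mul_apply, Fin.sum_univ_three, Matrix.diagonal, Matrix.one_apply]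
    have h1 : (J * A.transpose * J) * A = 1 := by
      calc (J * A.transpose * J) * A = J * (A.transpose * J * A) := by
            simp only [Matrix.mul_assoc]
        _ = J * J := by rw [hA]
        _ = 1 := hJJ
    have h2 : A * (J * A.transpose * J) = 1 := mul_eq_one_comm.mp h1
    calc A * J * A.transpose = A * J * A.transpose * (J * J) := by rw [hJJ, Matrix.mul_one]
      _ = (A * (J * A.transpose * J)) * J := by simp only [Matrix.mul_assoc]
      _ = J := by rw [h2, Matrix.one_mul]
  have v00 := congrFun (congrFun hA 0) 0
  have v01 := congrFun (congrFun hA 0) 1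
  have v02 := congrFun (congrFun hA 0) 2
  have v11 := congrFun (congrFun hA 1) 1
  have v12 := congrFun (congrFun hA 1) 2
  have v22 := congrFun (congrFun hA 2) 2
  have w00 := congrFun (congrFun hrow 0) 0
  have w01 := congrFun (congrFun hrow 0) 1
  have w02 := congrFun (congrFun hrow 0) 2
  have w11 := congrFun (congrFun hrow 1) 1
  have w12 := congrFun (congrFun hrow 1) 2
  have w22 := congrFun (congrFun hrow 2) 2
  simp [Matrix.mul_apply, Fin.sum_univ_three, Matrix.diagonal, Matrix.transpose_apply]
    at v00 v01 v02 v11 v12 v22 w00 w01 w02 w11 w12 w22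
  have hε2 : ε^2 = 1 := by rcases hε with ⟨_, rfl⟩ | ⟨_, rfl⟩ <;> norm_num
  have hεne : ε ≠ 0 := by
    intro h
    rw [h] at hε2
    norm_num at hε2
  have hA00 : A 0 0 ^ 2 ≥ 1 := by nlinarith [v00, sq_nonneg (A 1 0), sq_nonneg (A 2 0)]
  refine ⟨hA00, ?_⟩
  -- apply the key algebraic lemma
  have hsum : 0 < ε*(A 0 0 - A 1 0 + (A 0 1 - A 1 1)) + ε*(A 0 0 - A 1 0 - (A 0 1 - A 1 1)) := by
    rcases hε with ⟨h, rfl⟩ | ⟨h, rfl⟩ <;> nlinarith [v00, sq_nonneg (A 2 0)]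
  obtain ⟨a, b, c, d, k1, k2, k3, k4, k5, k6, k7, k8, k9⟩ :=
    key_sqrt (ε*(A 0 0 - A 1 0 + (A 0 1 - A 1 1))) (ε*(2*(A 0 2 - A 1 2)))
      (ε*(A 0 0 - A 1 0 - (A 0 1 - A 1 1)))
      (ε*(A 0 0 + A 1 0 + (A 0 1 + A 1 1))) (ε*(2*(A 0 2 + A 1 2)))
      (ε*(A 0 0 + A 1 0 - (A 0 1 + A 1 1)))
      (ε*(A 2 0 + A 2 1)) (ε*(2*(A 2 2))) (ε*(A 2 0 - A 2 1))
      (by linear_combination ε^2*(-4*w00 + 8*w01 - 4*w11))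
      (by linear_combination ε^2*(-2*w00 + 2*w11) + 4*hε2)
      (by linear_combination ε^2*(-4*w02 + 4*w12))
      (by linear_combination ε^2*(4*w22) + 4*hε2)
      (by linear_combination ε^2*(4*v22) + 4*hε2)
      (by linear_combination ε^2*(v00 + 2*v01 + v11))
      (by linear_combination ε^2*(v00 - 2*v01 + v11))
      (by linear_combination ε^2*(-4*v02 - 4*v12))
      (by linear_combination ε^2*(-4*v02 + 4*v12))
      hsum
  -- reconstruct the entries of A
  have h00 : A 0 0 = ε*(a^2+b^2+c^2+d^2)/2 := by
    linear_combination (ε/4)*(k1+k3+k4+k6) - A 0 0*hε2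
  have h01 : A 0 1 = ε*(a^2-b^2+c^2-d^2)/2 := by
    linear_combination (ε/4)*(k1-k3+k4-k6) - A 0 1*hε2
  have h02 : A 0 2 = ε*(a*b+c*d) := by
    linear_combination (ε/4)*(k2+k5) - A 0 2*hε2
  have h10 : A 1 0 = ε*(a^2+b^2-c^2-d^2)/2 := by
    linear_combination (ε/4)*(k4+k6-k1-k3) - A 1 0*hε2
  have h11' : A 1 1 = ε*(a^2-b^2-c^2+d^2)/2 := by
    linear_combination (ε/4)*(k4-k6-k1+k3) - A 1 1*hε2
  have h12 : A 1 2 = ε*(a*b-c*d) := by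
    linear_combination (ε/4)*(k5-k2) - A 1 2*hε2
  have h20 : A 2 0 = ε*(a*c+b*d) := by
    linear_combination (ε/2)*(k7+k9) - A 2 0*hε2
  have h21 : A 2 1 = ε*(a*c-b*d) := by
    linear_combination (ε/2)*(k7-k9) - A 2 1*hε2
  have h22 : A 2 2 = ε*(a*d+b*c) := by
    linear_combination (ε/2)*k8 - A 2 2*hε2
  have hdet3 : A.det = ε*(a*d-b*c)^3 := by
    rw [Matrix.det_fin_three, h00, h01, h02, h10, h11', h12, h20, h21, h22]
    linear_combination (ε*(a*d-b*c)^3)*hε2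
  have r6s : (ε*(2*(A 2 2)))^2 - 4*(ε*(A 2 0 + A 2 1))*(ε*(A 2 0 - A 2 1)) = 4 := by
    linear_combination ε^2*(4*w22) + 4*hε2
  have hD2 : (a*d-b*c)^2 = 1 := by
    linear_combination (-(ε*(2*(A 2 2)) + 2*(a*d+b*c))/4)*k8 + (ε*(A 2 0 - A 2 1))*k7
      + (2*a*c)*k9 + r6s/4
  refine ⟨a, b, c, d, ?_, ?_⟩
  · linear_combination (-ε)*hdet3 - (a*d-b*c)^3*hε2 - (a*d-b*c)*hD2
  · intro t ht
    have hn := hnull t ht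
    simp only [dot31] at hn
    have hu := hξ t ht
    have hx0 : deriv α t 0 = f t * (g t^2 + 1) := by
      rw [hf t ht, hg t ht]
      field_simp
      ring_nf
      linear_combination (-1 : ℝ) * hn
    have hx1 : deriv α t 1 = f t * (g t^2 - 1) := by
      rw [hf t ht, hg t ht]
      field_simp
      ring_nf
      linear_combination (-1 : ℝ) * hn
    have hx2 : deriv α t 2 = 2 * f t * g t := by
      rw [hf t ht, hg t ht]
      field_simp
    have hderiv : deriv αh t = A.mulVec (deriv α t) := by
      have hdiff : DifferentiableAt ℝ α t :=
        (hα.contDiffAt (hI.mem_nhds ht)).differentiableAt (by simp)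
      have hdα : HasDerivAt α (deriv α t) t := hdiff.hasDerivAt
      have hlin : HasDerivAt (fun s => A.mulVec (α s) + v) (A.mulVec (deriv α t)) t := by
        have h2 : HasDerivAt
            (fun s => (LinearMap.toContinuousLinearMap (Matrix.mulVecLin A)) (α s))
            ((LinearMap.toContinuousLinearMap (Matrix.mulVecLin A)) (deriv α t)) t :=
          (LinearMap.toContinuousLinearMap (Matrix.mulVecLin A)).hasFDerivAt.comp_hasDerivAt t hdα
        simpa using h2.add_const v
      have heq : αh =ᶠ[nhds t] fun s => A.mulVec (α s) + v := by
        filter_upwards [hI.mem_nhds ht] with s hs using hmove s hs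
      rw [heq.deriv_eq]
      exact hlin.deriv
    have hcomp0 : deriv αh t 0 =
        A 0 0 * deriv α t 0 + A 0 1 * deriv α t 1 + A 0 2 * deriv α t 2 := by
      rw [hderiv]; simp [Matrix.mulVec, dotProduct, Fin.sum_univ_three]
    have hcomp1 : deriv αh t 1 =
        A 1 0 * deriv α t 0 + A 1 1 * deriv α t 1 + A 1 2 * deriv α t 2 := by
      rw [hderiv]; simp [Matrix.mulVec, dotProduct, Fin.sum_univ_three]
    have hcomp2 : deriv αh t 2 =
        A 2 0 * deriv α t 0 + A 2 1 * deriv α t 1 + A 2 2 * deriv α t 2 := by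
      rw [hderiv]; simp [Matrix.mulVec, dotProduct, Fin.sum_univ_three]
    have E1 : deriv αh t 0 - deriv αh t 1 = 2*ε*f t*(c*g t+d)^2 := by
      rw [hcomp0, hcomp1]
      linear_combination (A 0 0 - A 1 0)*hx0 + (A 0 1 - A 1 1)*hx1 + (A 0 2 - A 1 2)*hx2
        + ε*f t*(g t)^2*k1 + ε*f t*(g t)*k2 + ε*f t*k3
        - f t*((A 0 0 - A 1 0 + (A 0 1 - A 1 1))*(g t)^2 + 2*(A 0 2 - A 1 2)*(g t)
          + (A 0 0 - A 1 0 - (A 0 1 - A 1 1)))*hε2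
    have E2 : deriv αh t 2 = 2*ε*f t*(a*g t+b)*(c*g t+d) := by
      rw [hcomp2]
      linear_combination (A 2 0)*hx0 + (A 2 1)*hx1 + (A 2 2)*hx2
        + ε*f t*(g t)^2*k7 + ε*f t*(g t)*k8 + ε*f t*k9
        - f t*((A 2 0 + A 2 1)*(g t)^2 + 2*(A 2 2)*(g t) + (A 2 0 - A 2 1))*hε2
    have hfne : f t ≠ 0 := by
      rw [hf t ht]
      exact div_ne_zero hu two_ne_zero
    have hne : c * g t + d ≠ 0 := by
      intro h0
      exact hξh t ht (by rw [E1, h0]; ring)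
    refine ⟨hne, ?_, ?_⟩
    · rw [hfh t ht, E1]; ring
    · rw [hgh t ht, E2, E1]
      rw [div_eq_div_iff (by exact mul_ne_zero (mul_ne_zero
        (mul_ne_zero two_ne_zero hεne) hfne) (pow_ne_zero 2 hne)) hne]
      ring
end
end

section
/- Let α be a smooth curve in ℝ⁴ defined on an open interval I with α' = f·(gh + 1, gh − 1, h − g, h + g), where f, g, h : I → ℝ are smooth and f is nowhere zero. Then, with respect to the scalar product of ℝ⁴₂, α''(t)·α''(t) = 4·f(t)²·g'(t)·h'(t) for all t ∈ I; consequently α is a nondegenerate null curve if and only if g'(t)·h'(t) ≠ 0 for all t ∈ I. -/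
noncomputable section

/-- For a curve in ℝ⁴₂ with Weierstrass-type representation generated by (f, g, h):
α''·α'' = 4f²g'h'; hence the null curve α is nondegenerate iff g'h' ≠ 0 everywhere. -/
theorem stmt_7 (I : Set ℝ) (hI : IsOpen I) (hIc : I.OrdConnected)
    (α : ℝ → Fin 4 → ℝ) (f g h : ℝ → ℝ)
    (hα : ContDiffOn ℝ (⊤ : ℕ∞) α I) (hfs : ContDiffOn ℝ (⊤ : ℕ∞) f I)
    (hgs : ContDiffOn ℝ (⊤ : ℕ∞) g I) (hhs : ContDiffOn ℝ (⊤ : ℕ∞) h I)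
    (hf0 : ∀ t ∈ I, f t ≠ 0)
    (hrep : ∀ t ∈ I, deriv α t =
      f t • ![g t * h t + 1, g t * h t - 1, h t - g t, h t + g t]) :
    (∀ t ∈ I, dot42 (deriv α t) (deriv α t) = 0) ∧
    (∀ t ∈ I, dot42 (deriv (deriv α) t) (deriv (deriv α) t) =
      4 * f t ^ 2 * deriv g t * deriv h t) ∧
    ((∀ t ∈ I, dot42 (deriv (deriv α) t) (deriv (deriv α) t) ≠ 0) ↔
      ∀ t ∈ I, deriv g t * deriv h t ≠ 0) := by
  have key : ∀ t ∈ I, dot42 (deriv (deriv α) t) (deriv (deriv α) t) =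
      4 * f t ^ 2 * deriv g t * deriv h t := by
    intro t ht
    have hmem := hI.mem_nhds ht
    have hf : HasDerivAt f (deriv f t) t :=
      ((hfs.differentiableOn (by simp)).differentiableAt hmem).hasDerivAt
    have hg : HasDerivAt g (deriv g t) t :=
      ((hgs.differentiableOn (by simp)).differentiableAt hmem).hasDerivAt
    have hh : HasDerivAt h (deriv h t) t :=
      ((hhs.differentiableOn (by simp)).differentiableAt hmem).hasDerivAt
    set f' := deriv f t
    set g' := deriv g t
    set h' := deriv h t
    have hF : HasDerivAt (fun s => f s • ![g s * h s + 1, g s * h s - 1,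
        h s - g s, h s + g s])
        ![f' * (g t * h t + 1) + f t * (g' * h t + g t * h'),
          f' * (g t * h t - 1) + f t * (g' * h t + g t * h'),
          f' * (h t - g t) + f t * (h' - g'),
          f' * (h t + g t) + f t * (h' + g')] t := by
      rw [hasDerivAt_pi]
      intro i
      fin_cases i <;> simp only [Matrix.smul_cons, smul_eq_mul, Matrix.smul_empty,
        Matrix.cons_val_zero, Matrix.cons_val_one, Matrix.head_cons,
        Matrix.cons_val_two, Matrix.tail_cons, Matrix.cons_val_three]
      · have := hf.mul ((hg.mul hh).add_const 1)
        convert this using 1 <;> rfl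
      · have := hf.mul ((hg.mul hh).sub_const 1)
        convert this using 1 <;> rfl
      · have := hf.mul (hh.sub hg)
        convert this using 1 <;> rfl
      · have := hf.mul (hh.add hg)
        convert this using 1 <;> rfl
    have heq : deriv α =ᶠ[nhds t] (fun s => f s • ![g s * h s + 1, g s * h s - 1,
        h s - g s, h s + g s]) :=
      Filter.eventuallyEq_of_mem hmem hrep
    have : deriv (deriv α) t = _ := heq.deriv_eq.trans hF.deriv
    rw [this]
    simp only [dot42, Matrix.cons_val_zero, Matrix.cons_val_one, Matrix.head_cons,
      Matrix.cons_val_two, Matrix.tail_cons, Matrix.cons_val_three]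
    ring
  refine ⟨?_, key, ?_⟩
  · intro t ht
    rw [hrep t ht]
    simp only [dot42, Matrix.smul_cons, smul_eq_mul, Matrix.smul_empty,
      Matrix.cons_val_zero, Matrix.cons_val_one, Matrix.head_cons,
      Matrix.cons_val_two, Matrix.tail_cons, Matrix.cons_val_three]
    ring
  · constructor
    · intro H t ht
      have := H t ht
      rw [key t ht] at this
      intro hc
      apply this
      rw [mul_assoc, hc, mul_zero]
    · intro H t ht
      rw [key t ht]
      have hf := hf0 t ht
      have := H t ht
      rw [mul_assoc]
      positivity
end
end

section
/- Let α be a smooth curve in ℝ³ defined on an open interval I with α' = f·(g² + 1, g² − 1, 2g), where f, g : I → ℝ are smooth and f is nowhere zero. Then, with respect to the scalar product of ℝ³₁, α''(t)·α''(t) = 4·f(t)²·g'(t)² for all t ∈ I; consequently α is a nondegenerate null curve if and only if g'(t) ≠ 0 for all t ∈ I. -/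
noncomputable section

/-- For a curve in ℝ³₁ with Weierstrass-type representation generated by (f, g):
α''·α'' = 4f²g'²; hence the null curve α is nondegenerate iff g' ≠ 0 everywhere. -/
theorem stmt_8 (I : Set ℝ) (hI : IsOpen I) (hIc : I.OrdConnected)
    (α : ℝ → Fin 3 → ℝ) (f g : ℝ → ℝ)
    (hα : ContDiffOn ℝ (⊤ : ℕ∞) α I) (hfs : ContDiffOn ℝ (⊤ : ℕ∞) f I)
    (hgs : ContDiffOn ℝ (⊤ : ℕ∞) g I)
    (hf0 : ∀ t ∈ I, f t ≠ 0)
    (hrep : ∀ t ∈ I, deriv α t = f t • ![g t ^ 2 + 1, g t ^ 2 - 1, 2 * g t]) :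
    (∀ t ∈ I, dot31 (deriv α t) (deriv α t) = 0) ∧
    (∀ t ∈ I, dot31 (deriv (deriv α) t) (deriv (deriv α) t) =
      4 * f t ^ 2 * deriv g t ^ 2) ∧
    ((∀ t ∈ I, dot31 (deriv (deriv α) t) (deriv (deriv α) t) ≠ 0) ↔
      ∀ t ∈ I, deriv g t ≠ 0) := by
  have hnull : ∀ t ∈ I, dot31 (deriv α t) (deriv α t) = 0 := by
    intro t ht
    rw [hrep t ht]
    simp [dot31]
    ring
  have hsec : ∀ t ∈ I, dot31 (deriv (deriv α) t) (deriv (deriv α) t) =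
      4 * f t ^ 2 * deriv g t ^ 2 := by
    intro t ht
    have hft : DifferentiableAt ℝ f t :=
      ((hfs.differentiableOn (by simp)) t ht).differentiableAt (hI.mem_nhds ht)
    have hgt : DifferentiableAt ℝ g t :=
      ((hgs.differentiableOn (by simp)) t ht).differentiableAt (hI.mem_nhds ht)
    have hgf : HasDerivAt g (deriv g t) t := hgt.hasDerivAt
    have hff : HasDerivAt f (deriv f t) t := hft.hasDerivAt
    -- derivative of each component
    have h0 : HasDerivAt (fun s => f s * (g s ^ 2 + 1))
        (deriv f t * (g t ^ 2 + 1) + f t * (2 * g t * deriv g t)) t := by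
      have := hff.mul ((((hgf.pow 2)).add_const 1))
      simpa [Pi.mul_def, mul_comm, mul_assoc, mul_left_comm] using this
    have h1 : HasDerivAt (fun s => f s * (g s ^ 2 - 1))
        (deriv f t * (g t ^ 2 - 1) + f t * (2 * g t * deriv g t)) t := by
      have := hff.mul ((((hgf.pow 2)).sub_const 1))
      simpa [Pi.mul_def, mul_comm, mul_assoc, mul_left_comm] using this
    have h2 : HasDerivAt (fun s => f s * (2 * g s))
        (deriv f t * (2 * g t) + f t * (2 * deriv g t)) t := by
      have := hff.mul (hgf.const_mul 2)
      simpa [Pi.mul_def, mul_comm, mul_assoc, mul_left_comm] using this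
    have hvec : HasDerivAt (fun s => f s • ![g s ^ 2 + 1, g s ^ 2 - 1, 2 * g s])
        (![deriv f t * (g t ^ 2 + 1) + f t * (2 * g t * deriv g t),
           deriv f t * (g t ^ 2 - 1) + f t * (2 * g t * deriv g t),
           deriv f t * (2 * g t) + f t * (2 * deriv g t)]) t := by
      rw [hasDerivAt_pi]
      intro i
      fin_cases i
      · simpa [Matrix.smul_cons, smul_eq_mul] using h0
      · simpa [Matrix.smul_cons, smul_eq_mul] using h1
      · simpa [Matrix.smul_cons, smul_eq_mul] using h2
    have heq : deriv α =ᶠ[nhds t] fun s => f s • ![g s ^ 2 + 1, g s ^ 2 - 1, 2 * g s] := by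
      filter_upwards [hI.mem_nhds ht] with s hs using hrep s hs
    have hderiv2 : deriv (deriv α) t =
        ![deriv f t * (g t ^ 2 + 1) + f t * (2 * g t * deriv g t),
          deriv f t * (g t ^ 2 - 1) + f t * (2 * g t * deriv g t),
          deriv f t * (2 * g t) + f t * (2 * deriv g t)] := by
      rw [heq.deriv_eq]
      exact hvec.deriv
    rw [hderiv2]
    simp [dot31]
    ring
  refine ⟨hnull, hsec, ?_⟩
  constructor
  · intro h t ht
    intro hg
    apply h t ht
    rw [hsec t ht, hg]
    ring
  · intro h t ht
    rw [hsec t ht]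
    have := hf0 t ht
    have := h t ht
    positivity
end
end

section
/- Let α be a null curve in ℝ⁴₂ on an open interval I whose derivative α' = (ξ₁, ξ₂, ξ₃, ξ₄) satisfies ξ₁ − ξ₂ ≠ 0 everywhere, with Weierstrass data (f, g, h), and suppose α is parametrized by a natural parameter, i.e., α''(t)·α''(t) = ε for all t, where ε ∈ {1, −1} is a constant. Then g'(t)·h'(t) ≠ 0 and sign(g'(t)·h'(t)) = ε for all t ∈ I, and there exists ω ∈ {1, −1} such that f(t) = ω/(2·√(|g'(t)·h'(t)|)) for all t ∈ I; equivalently α' = (ω/(2√(|g'h'|)))·(gh + 1, gh − 1, h − g, h + g). -/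
noncomputable section

/-- Canonical Weierstrass-type representation of a null curve in ℝ⁴₂ parametrized by a
natural parameter (α''·α'' ≡ ε ∈ {1, −1}): then g'h' ≠ 0 with sign ε, and
f = ω/(2√|g'h'|) for a constant ω ∈ {1, −1}. -/
theorem stmt_9 (I : Set ℝ) (hI : IsOpen I) (hIc : I.OrdConnected)
    (α : ℝ → Fin 4 → ℝ) (hα : ContDiffOn ℝ (⊤ : ℕ∞) α I)
    (hnull : ∀ t ∈ I, dot42 (deriv α t) (deriv α t) = 0)
    (hξ : ∀ t ∈ I, deriv α t 0 - deriv α t 1 ≠ 0)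
    (f g h : ℝ → ℝ)
    (hf : ∀ t ∈ I, f t = (deriv α t 0 - deriv α t 1) / 2)
    (hg : ∀ t ∈ I, g t = (deriv α t 3 - deriv α t 2) / (deriv α t 0 - deriv α t 1))
    (hh : ∀ t ∈ I, h t = (deriv α t 3 + deriv α t 2) / (deriv α t 0 - deriv α t 1))
    (ε : ℝ) (hε : ε = 1 ∨ ε = -1)
    (hnat : ∀ t ∈ I, dot42 (deriv (deriv α) t) (deriv (deriv α) t) = ε) :
    (∀ t ∈ I, deriv g t * deriv h t ≠ 0 ∧ Real.sign (deriv g t * deriv h t) = ε) ∧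
    ∃ ω : ℝ, (ω = 1 ∨ ω = -1) ∧ ∀ t ∈ I,
      f t = ω / (2 * Real.sqrt |deriv g t * deriv h t|) ∧
      deriv α t = (ω / (2 * Real.sqrt |deriv g t * deriv h t|)) •
        ![g t * h t + 1, g t * h t - 1, h t - g t, h t + g t] := by
  classical
  have hC : ContDiffOn ℝ (⊤ : ℕ∞) (deriv α) I := hα.deriv_of_isOpen hI (by simp)
  have h2 : ∀ t ∈ I, ∀ i, HasDerivAt (fun s => deriv α s i) (deriv (deriv α) t i) t :=
    fun t ht i => hasDerivAt_pi.1
      ((hC.contDiffAt (hI.mem_nhds ht)).differentiableAt (by simp)).hasDerivAt i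
  -- differentiated null condition : ξ·η = 0
  have hC1 : ∀ t ∈ I,
      -(deriv α t 0 * deriv (deriv α) t 0) + deriv α t 1 * deriv (deriv α) t 1
        - deriv α t 2 * deriv (deriv α) t 2 + deriv α t 3 * deriv (deriv α) t 3 = 0 := by
    intro t ht
    have hΦ : HasDerivAt (fun s => -(deriv α s 0 * deriv α s 0) + deriv α s 1 * deriv α s 1
        - deriv α s 2 * deriv α s 2 + deriv α s 3 * deriv α s 3)
        (-(deriv (deriv α) t 0 * deriv α t 0 + deriv α t 0 * deriv (deriv α) t 0)
          + (deriv (deriv α) t 1 * deriv α t 1 + deriv α t 1 * deriv (deriv α) t 1)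
          - (deriv (deriv α) t 2 * deriv α t 2 + deriv α t 2 * deriv (deriv α) t 2)
          + (deriv (deriv α) t 3 * deriv α t 3 + deriv α t 3 * deriv (deriv α) t 3)) t :=
      ((((h2 t ht 0).mul (h2 t ht 0)).neg.add ((h2 t ht 1).mul (h2 t ht 1))).sub
        ((h2 t ht 2).mul (h2 t ht 2))).add ((h2 t ht 3).mul (h2 t ht 3))
    have hzero : (fun _ : ℝ => (0:ℝ)) =ᶠ[nhds t]
        (fun s => -(deriv α s 0 * deriv α s 0) + deriv α s 1 * deriv α s 1
          - deriv α s 2 * deriv α s 2 + deriv α s 3 * deriv α s 3) := by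
      filter_upwards [hI.mem_nhds ht] with s hs
      have := hnull s hs
      simp only [dot42] at this
      linarith
    have h0 := hΦ.congr_of_eventuallyEq hzero
    have huniq := (hasDerivAt_const t (0:ℝ)).unique h0
    linarith
  -- derivative of g
  have hgd : ∀ t ∈ I, deriv g t =
      ((deriv (deriv α) t 3 - deriv (deriv α) t 2) * (deriv α t 0 - deriv α t 1)
        - (deriv α t 3 - deriv α t 2) * (deriv (deriv α) t 0 - deriv (deriv α) t 1))
        / (deriv α t 0 - deriv α t 1) ^ 2 := by
    intro t ht
    have hG := ((h2 t ht 3).sub (h2 t ht 2)).div ((h2 t ht 0).sub (h2 t ht 1)) (hξ t ht)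
    have heq : g =ᶠ[nhds t]
        fun s => (deriv α s 3 - deriv α s 2) / (deriv α s 0 - deriv α s 1) := by
      filter_upwards [hI.mem_nhds ht] with s hs using hg s hs
    exact (hG.congr_of_eventuallyEq heq).deriv
  have hhd : ∀ t ∈ I, deriv h t =
      ((deriv (deriv α) t 3 + deriv (deriv α) t 2) * (deriv α t 0 - deriv α t 1)
        - (deriv α t 3 + deriv α t 2) * (deriv (deriv α) t 0 - deriv (deriv α) t 1))
        / (deriv α t 0 - deriv α t 1) ^ 2 := by
    intro t ht
    have hG := ((h2 t ht 3).add (h2 t ht 2)).div ((h2 t ht 0).sub (h2 t ht 1)) (hξ t ht)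
    have heq : h =ᶠ[nhds t]
        fun s => (deriv α s 3 + deriv α s 2) / (deriv α s 0 - deriv α s 1) := by
      filter_upwards [hI.mem_nhds ht] with s hs using hh s hs
    exact (hG.congr_of_eventuallyEq heq).deriv
  -- the key identity : g'h' = ε / (ξ₁-ξ₂)²
  have key : ∀ t ∈ I, deriv g t * deriv h t = ε / (deriv α t 0 - deriv α t 1) ^ 2 := by
    intro t ht
    have hu := hξ t ht
    have c0 := hnull t ht
    have c2 := hnat t ht
    have c1 := hC1 t ht
    simp only [dot42] at c0 c2
    rw [hgd t ht, hhd t ht]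
    field_simp
    linear_combination ((deriv α t 0 - deriv α t 1) ^ 2) * c2
      - (2 * (deriv α t 0 - deriv α t 1) * (deriv (deriv α) t 0 - deriv (deriv α) t 1)) * c1
      + ((deriv (deriv α) t 0 - deriv (deriv α) t 1) ^ 2) * c0
  have upos : ∀ t ∈ I, 0 < (deriv α t 0 - deriv α t 1) ^ 2 := by
    intro t ht
    have := hξ t ht
    positivity
  have part1 : ∀ t ∈ I, deriv g t * deriv h t ≠ 0 ∧
      Real.sign (deriv g t * deriv h t) = ε := by
    intro t ht
    rw [key t ht]
    rcases hε with h1 | h1 <;> subst h1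
    · have hpos : (0:ℝ) < 1 / (deriv α t 0 - deriv α t 1) ^ 2 :=
        div_pos one_pos (upos t ht)
      exact ⟨ne_of_gt hpos, Real.sign_of_pos hpos⟩
    · have hneg : (-1:ℝ) / (deriv α t 0 - deriv α t 1) ^ 2 < 0 :=
        div_neg_of_neg_of_pos (by norm_num) (upos t ht)
      exact ⟨ne_of_lt hneg, Real.sign_of_neg hneg⟩
  have habs : ∀ t ∈ I, Real.sqrt |deriv g t * deriv h t|
      = 1 / |deriv α t 0 - deriv α t 1| := by
    intro t ht
    rw [key t ht, abs_div]
    have hε1 : |ε| = 1 := by rcases hε with h1 | h1 <;> simp [h1]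
    rw [hε1, abs_pow, one_div, Real.sqrt_inv, Real.sqrt_sq_eq_abs, abs_abs, one_div]
  refine ⟨part1, ?_⟩
  by_cases hne : I.Nonempty
  · obtain ⟨t₀, ht₀⟩ := hne
    have hucont : ContinuousOn (fun s => deriv α s 0 - deriv α s 1) I :=
      ((continuous_apply 0).comp_continuousOn hC.continuousOn).sub
        ((continuous_apply 1).comp_continuousOn hC.continuousOn)
    have hsame : ∀ t ∈ I,
        0 < (deriv α t 0 - deriv α t 1) * (deriv α t₀ 0 - deriv α t₀ 1) := by
      intro t ht
      rcases lt_or_gt_of_ne (mul_ne_zero (hξ t ht) (hξ t₀ ht₀)) with hlt | hgt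
      · exfalso
        have hsub : Set.uIcc t t₀ ⊆ I := hIc.uIcc_subset ht ht₀
        have hcont := hucont.mono hsub
        have h0mem : (0:ℝ) ∈ Set.uIcc (deriv α t 0 - deriv α t 1)
            (deriv α t₀ 0 - deriv α t₀ 1) := by
          rcases mul_neg_iff.1 hlt with ⟨ha, hb⟩ | ⟨ha, hb⟩
          · exact Set.mem_uIcc.2 (Or.inr ⟨hb.le, ha.le⟩)
          · exact Set.mem_uIcc.2 (Or.inl ⟨ha.le, hb.le⟩)
        obtain ⟨c, hcmem, hc0⟩ := intermediate_value_uIcc hcont h0mem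
        exact hξ c (hsub hcmem) hc0
      · exact hgt
    refine ⟨Real.sign (deriv α t₀ 0 - deriv α t₀ 1), ?_, ?_⟩
    · rcases (hξ t₀ ht₀).lt_or_gt with hneg | hpos
      · exact Or.inr (Real.sign_of_neg hneg)
      · exact Or.inl (Real.sign_of_pos hpos)
    · intro t ht
      have hsgn : Real.sign (deriv α t₀ 0 - deriv α t₀ 1) * |deriv α t 0 - deriv α t 1|
          = deriv α t 0 - deriv α t 1 := by
        rcases (hξ t₀ ht₀).lt_or_gt with hneg | hpos
        · have hut : deriv α t 0 - deriv α t 1 < 0 := by nlinarith [hsame t ht]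
          rw [Real.sign_of_neg hneg, abs_of_neg hut]; ring
        · have hut : 0 < deriv α t 0 - deriv α t 1 := by nlinarith [hsame t ht]
          rw [Real.sign_of_pos hpos, abs_of_pos hut]; ring
      have hane : |deriv α t 0 - deriv α t 1| ≠ 0 := abs_ne_zero.2 (hξ t ht)
      have hval : Real.sign (deriv α t₀ 0 - deriv α t₀ 1)
          / (2 * Real.sqrt |deriv g t * deriv h t|) = f t := by
        rw [habs t ht, hf t ht]
        field_simp
        linarith [hsgn]
      refine ⟨hval.symm, ?_⟩
      rw [hval]
      have c0 := hnull t ht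
      simp only [dot42] at c0
      have hu := hξ t ht
      have e0 : deriv α t 0 = f t * (g t * h t + 1) := by
        rw [hf t ht, hg t ht, hh t ht]; field_simp; linear_combination (-1) * c0
      have e1 : deriv α t 1 = f t * (g t * h t - 1) := by
        rw [hf t ht, hg t ht, hh t ht]; field_simp; linear_combination (-1) * c0
      have e2 : deriv α t 2 = f t * (h t - g t) := by
        rw [hf t ht, hg t ht, hh t ht]; field_simp; ring
      have e3 : deriv α t 3 = f t * (h t + g t) := by
        rw [hf t ht, hg t ht, hh t ht]; field_simp; ring
      funext i
      fin_cases i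
      · show deriv α t 0 = (f t • ![g t * h t + 1, g t * h t - 1, h t - g t, h t + g t]) 0
        simpa using e0
      · show deriv α t 1 = (f t • ![g t * h t + 1, g t * h t - 1, h t - g t, h t + g t]) 1
        simpa using e1
      · show deriv α t 2 = (f t • ![g t * h t + 1, g t * h t - 1, h t - g t, h t + g t]) 2
        simpa using e2
      · show deriv α t 3 = (f t • ![g t * h t + 1, g t * h t - 1, h t - g t, h t + g t]) 3
        simpa using e3
  · exact ⟨1, Or.inl rfl, fun t ht => absurd (Set.nonempty_of_mem ht) hne⟩
end
end

section
/- Let I be an open interval, g, h : I → ℝ smooth functions with g'(t)·h'(t) ≠ 0 for all t ∈ I, and ω ∈ {1, −1}. Then there exists a smooth curve α : I → ℝ⁴ with α'(t) = (ω/(2·√(|g'(t)·h'(t)|)))·(g(t)h(t) + 1, g(t)h(t) − 1, h(t) − g(t), h(t) + g(t)) for all t ∈ I; this curve is a null curve in ℝ⁴₂ parametrized by a natural parameter: for all t, α''(t)·α''(t) = sign(g'(t)·h'(t)) ∈ {1, −1}. -/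
noncomputable section

open scoped NNReal ENNReal Topology
open Filter Set Metric

section Helpers

variable {E : Type*} [NormedAddCommGroup E] [NormedSpace ℝ E] [CompleteSpace E]

/-- `√|x|` is smooth away from `0`. -/
lemma contDiffAt_sqrt_abs' {x : ℝ} (hx : x ≠ 0) :
    ContDiffAt ℝ (⊤ : ℕ∞) (fun y : ℝ => Real.sqrt |y|) x := by
  rcases hx.lt_or_gt with h | h
  · have hev : (fun y : ℝ => Real.sqrt |y|) =ᶠ[𝓝 x] fun y => Real.sqrt (-y) := by
      filter_upwards [Iio_mem_nhds h] with y hy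
      rw [abs_of_neg hy]
    exact ((Real.contDiffAt_sqrt (neg_ne_zero.mpr hx)).comp x
      (contDiff_neg.contDiffAt)).congr_of_eventuallyEq hev
  · have hev : (fun y : ℝ => Real.sqrt |y|) =ᶠ[𝓝 x] Real.sqrt := by
      filter_upwards [Ioi_mem_nhds h] with y hy
      rw [abs_of_pos hy]
    exact (Real.contDiffAt_sqrt hx).congr_of_eventuallyEq hev

end Helpers

/-- Given smooth g, h with g'h' ≠ 0 and ω ∈ {1, −1}, there exists a null curve in ℝ⁴₂
parametrized by a natural parameter, having the canonical Weierstrass-type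
representation generated by (g, h) and ω. -/
theorem stmt_10 (I : Set ℝ) (hI : IsOpen I) (hIc : I.OrdConnected)
    (g h : ℝ → ℝ) (hg : ContDiffOn ℝ (⊤ : ℕ∞) g I) (hh : ContDiffOn ℝ (⊤ : ℕ∞) h I)
    (hgh : ∀ t ∈ I, deriv g t * deriv h t ≠ 0)
    (ω : ℝ) (hω : ω = 1 ∨ ω = -1) :
    ∃ α : ℝ → Fin 4 → ℝ, ContDiffOn ℝ (⊤ : ℕ∞) α I ∧
      (∀ t ∈ I, deriv α t = (ω / (2 * Real.sqrt |deriv g t * deriv h t|)) •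
        ![g t * h t + 1, g t * h t - 1, h t - g t, h t + g t]) ∧
      (∀ t ∈ I, dot42 (deriv α t) (deriv α t) = 0) ∧
      (∀ t ∈ I, dot42 (deriv (deriv α) t) (deriv (deriv α) t) =
          Real.sign (deriv g t * deriv h t) ∧
        (Real.sign (deriv g t * deriv h t) = 1 ∨
          Real.sign (deriv g t * deriv h t) = -1)) := by
  -- the sign statement, needed in any case
  have hsign : ∀ t ∈ I, Real.sign (deriv g t * deriv h t) = 1 ∨
      Real.sign (deriv g t * deriv h t) = -1 := by
    intro t ht
    rcases (hgh t ht).lt_or_gt with hlt | hlt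
    · right; exact Real.sign_of_neg hlt
    · left; exact Real.sign_of_pos hlt
  rcases I.eq_empty_or_nonempty with hIe | ⟨t₀, ht₀⟩
  · subst hIe
    exact ⟨0, fun x hx => hx.elim, fun t ht => ht.elim, fun t ht => ht.elim,
      fun t ht => ht.elim⟩
  set q : ℝ → ℝ := fun t => deriv g t * deriv h t with hqdef
  have hq0 : ∀ t ∈ I, q t ≠ 0 := hgh
  have hdg : ContDiffOn ℝ (⊤ : ℕ∞) (deriv g) I := hg.deriv_of_isOpen hI (by simp)
  have hdh : ContDiffOn ℝ (⊤ : ℕ∞) (deriv h) I := hh.deriv_of_isOpen hI (by simp)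
  have hqC : ContDiffOn ℝ (⊤ : ℕ∞) q I := hdg.mul hdh
  have hsqrtpos : ∀ t ∈ I, 0 < Real.sqrt |q t| := fun t ht =>
    Real.sqrt_pos.2 (abs_pos.2 (hq0 t ht))
  set c : ℝ → ℝ := fun t => ω / (2 * Real.sqrt |q t|) with hcdef
  have hcC : ContDiffOn ℝ (⊤ : ℕ∞) c I := by
    apply ContDiffOn.div contDiffOn_const
    · exact contDiffOn_const.mul (fun t ht =>
        (contDiffAt_sqrt_abs' (hq0 t ht)).comp_contDiffWithinAt t (hqC t ht))
    · intro t ht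
      have := hsqrtpos t ht
      positivity
  set v : ℝ → Fin 4 → ℝ :=
    fun t => ![g t * h t + 1, g t * h t - 1, h t - g t, h t + g t] with hvdef
  have hvC : ContDiffOn ℝ (⊤ : ℕ∞) v I := by
    rw [contDiffOn_pi]
    intro i
    fin_cases i
    · simpa [hvdef] using (hg.mul hh).add contDiffOn_const
    · simpa [hvdef] using (hg.mul hh).sub contDiffOn_const
    · simpa [hvdef] using hh.sub hg
    · simpa [hvdef] using hh.add hg
  set F : ℝ → Fin 4 → ℝ := fun t => c t • v t with hFdef
  have hFC : ContDiffOn ℝ (⊤ : ℕ∞) F I := hcC.smul hvC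
  have hFcont : ContinuousOn F I := hFC.continuousOn
  set α : ℝ → Fin 4 → ℝ := fun t => ∫ s in t₀..t, F s with hαdef
  have hαderiv : ∀ t ∈ I, HasDerivAt α (F t) t := by
    intro t ht
    apply intervalIntegral.integral_hasDerivAt_right
    · exact (hFcont.mono (hIc.uIcc_subset ht₀ ht)).intervalIntegrable
    · exact hFcont.stronglyMeasurableAtFilter hI t ht
    · exact hFcont.continuousAt (hI.mem_nhds ht)
  have hαC : ContDiffOn ℝ (⊤ : ℕ∞) α I := by
    rw [contDiffOn_infty_iff_deriv_of_isOpen hI]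
    exact ⟨fun t ht => (hαderiv t ht).differentiableAt.differentiableWithinAt,
      hFC.congr (fun t ht => (hαderiv t ht).deriv)⟩
  have hda : ∀ t ∈ I, deriv α t = F t := fun t ht => (hαderiv t ht).deriv
  refine ⟨α, hαC, fun t ht => hda t ht, ?_, ?_⟩
  · intro t ht
    rw [hda t ht]
    show dot42 (c t • v t) (c t • v t) = 0
    simp only [hvdef, dot42, Pi.smul_apply, smul_eq_mul, Matrix.cons_val_zero,
      Matrix.cons_val_one, Matrix.head_cons, Matrix.cons_val_two, Matrix.tail_cons,
      Matrix.cons_val_three]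
    ring
  · intro t ht
    refine ⟨?_, hsign t ht⟩
    -- compute the second derivative
    have hgd : HasDerivAt g (deriv g t) t :=
      ((hg.contDiffAt (hI.mem_nhds ht)).differentiableAt (by simp)).hasDerivAt
    have hhd : HasDerivAt h (deriv h t) t :=
      ((hh.contDiffAt (hI.mem_nhds ht)).differentiableAt (by simp)).hasDerivAt
    have hcd : HasDerivAt c (deriv c t) t :=
      ((hcC.contDiffAt (hI.mem_nhds ht)).differentiableAt (by simp)).hasDerivAt
    have hvd : HasDerivAt v
        ![deriv g t * h t + g t * deriv h t, deriv g t * h t + g t * deriv h t,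
          deriv h t - deriv g t, deriv h t + deriv g t] t := by
      rw [hasDerivAt_pi]
      intro i
      fin_cases i
      · simpa [hvdef] using (hgd.mul hhd).add_const 1
      · simpa [hvdef] using (hgd.mul hhd).sub_const 1
      · simpa [hvdef, Pi.sub_def] using hhd.sub hgd
      · simpa [hvdef, Pi.add_def] using hhd.add hgd
    have hFd : HasDerivAt F
        (c t • ![deriv g t * h t + g t * deriv h t, deriv g t * h t + g t * deriv h t,
          deriv h t - deriv g t, deriv h t + deriv g t] + deriv c t • v t) t :=
      hcd.smul hvd
    have hEq : deriv (deriv α) t = deriv F t := by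
      apply Filter.EventuallyEq.deriv_eq
      filter_upwards [hI.mem_nhds ht] with s hs
      exact hda s hs
    rw [hEq, hFd.deriv]
    -- now a computation
    have hs2 : Real.sqrt |q t| ^ 2 = |q t| := Real.sq_sqrt (abs_nonneg _)
    have hspos := hsqrtpos t ht
    have hω2 : ω ^ 2 = 1 := by rcases hω with h1 | h1 <;> rw [h1] <;> norm_num
    have step : dot42
        (c t • ![deriv g t * h t + g t * deriv h t, deriv g t * h t + g t * deriv h t,
          deriv h t - deriv g t, deriv h t + deriv g t] + deriv c t • v t)
        (c t • ![deriv g t * h t + g t * deriv h t, deriv g t * h t + g t * deriv h t,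
          deriv h t - deriv g t, deriv h t + deriv g t] + deriv c t • v t)
        = c t ^ 2 * (4 * q t) := by
      simp only [hvdef, dot42, Pi.add_apply, Pi.smul_apply, smul_eq_mul,
        Matrix.cons_val_zero, Matrix.cons_val_one, Matrix.head_cons,
        Matrix.cons_val_two, Matrix.tail_cons, Matrix.cons_val_three, hqdef]
      ring
    rw [step]
    have hcsq : c t ^ 2 * (4 * q t) = q t / |q t| := by
      rw [hcdef]
      simp only
      rw [div_pow, mul_pow, hs2, hω2]
      have habs : |q t| ≠ 0 := ne_of_gt (abs_pos.2 (hq0 t ht))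
      field_simp
      ring
    rw [hcsq]
    rcases (hq0 t ht).lt_or_gt with hlt | hlt
    · rw [abs_of_neg hlt, Real.sign_of_neg hlt, div_neg, div_self (ne_of_lt hlt)]
    · rw [abs_of_pos hlt, Real.sign_of_pos hlt, div_self (ne_of_gt hlt)]
end
end

section
/- Let α be a null curve in ℝ³₁ on an open interval I whose derivative α' = (ξ₁, ξ₂, ξ₃) satisfies ξ₁ − ξ₂ ≠ 0 everywhere, with Weierstrass data (f, g), and suppose α is parametrized by a natural parameter, i.e., α''(t)·α''(t) = 1 for all t. Then g'(t) ≠ 0 for all t ∈ I and there exists ω ∈ {1, −1} such that f(t) = ω/(2·|g'(t)|) for all t ∈ I; equivalently α' = (ω/(2|g'|))·(g² + 1, g² − 1, 2g). -/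
noncomputable section

/-- Canonical Weierstrass-type representation of a null curve in ℝ³₁ parametrized by a
natural parameter (α''·α'' ≡ 1): then g' ≠ 0, and f = ω/(2|g'|) for a constant
ω ∈ {1, −1}. -/
theorem stmt_11 (I : Set ℝ) (hI : IsOpen I) (hIc : I.OrdConnected)
    (α : ℝ → Fin 3 → ℝ) (hα : ContDiffOn ℝ (⊤ : ℕ∞) α I)
    (hnull : ∀ t ∈ I, dot31 (deriv α t) (deriv α t) = 0)
    (hξ : ∀ t ∈ I, deriv α t 0 - deriv α t 1 ≠ 0)
    (f g : ℝ → ℝ)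
    (hf : ∀ t ∈ I, f t = (deriv α t 0 - deriv α t 1) / 2)
    (hg : ∀ t ∈ I, g t = deriv α t 2 / (deriv α t 0 - deriv α t 1))
    (hnat : ∀ t ∈ I, dot31 (deriv (deriv α) t) (deriv (deriv α) t) = 1) :
    (∀ t ∈ I, deriv g t ≠ 0) ∧
    ∃ ω : ℝ, (ω = 1 ∨ ω = -1) ∧ ∀ t ∈ I,
      f t = ω / (2 * |deriv g t|) ∧
      deriv α t = (ω / (2 * |deriv g t|)) •
        ![g t ^ 2 + 1, g t ^ 2 - 1, 2 * g t] := by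
  classical
  rcases Set.eq_empty_or_nonempty I with hIe | ⟨t₀, ht₀⟩
  · subst hIe
    exact ⟨fun t ht => absurd ht (by simp), 1, Or.inl rfl, fun t ht => absurd ht (by simp)⟩
  -- smoothness of the derivative
  have hξC : ContDiffOn ℝ (⊤ : ℕ∞) (deriv α) I := hα.deriv_of_isOpen hI (by simp)
  have hcomp : ∀ t ∈ I, ∀ i, HasDerivAt (fun s => deriv α s i) (deriv (deriv α) t i) t := by
    intro t ht
    have h1 : DifferentiableAt ℝ (deriv α) t :=
      (hξC.contDiffAt (hI.mem_nhds ht)).differentiableAt (by simp)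
    exact hasDerivAt_pi.1 h1.hasDerivAt
  -- derivative of the null relation
  have hc2 : ∀ t ∈ I,
      -(deriv α t 0 * deriv (deriv α) t 0) + deriv α t 1 * deriv (deriv α) t 1
        + deriv α t 2 * deriv (deriv α) t 2 = 0 := by
    intro t ht
    set a : Fin 3 → ℝ := deriv α t with ha
    set b : Fin 3 → ℝ := deriv (deriv α) t with hb
    have hN : HasDerivAt (fun s => dot31 (deriv α s) (deriv α s))
        ((-(b 0 * a 0 + a 0 * b 0) + (b 1 * a 1 + a 1 * b 1)) + (b 2 * a 2 + a 2 * b 2)) t := by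
      have := ((((hcomp t ht 0).mul (hcomp t ht 0)).neg.add
        ((hcomp t ht 1).mul (hcomp t ht 1))).add ((hcomp t ht 2).mul (hcomp t ht 2)))
      have hfun : (fun s => dot31 (deriv α s) (deriv α s)) =
          ((-((fun s => deriv α s 0) * fun s => deriv α s 0) + (fun s => deriv α s 1) * fun s => deriv α s 1) +
            (fun s => deriv α s 2) * fun s => deriv α s 2) := by
        funext s; simp [dot31]
      rw [hfun]; exact this
    have hNev : (fun s => dot31 (deriv α s) (deriv α s)) =ᶠ[nhds t] fun _ => (0 : ℝ) :=
      Filter.eventuallyEq_of_mem (hI.mem_nhds ht) hnull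
    have hzero : HasDerivAt (fun s => dot31 (deriv α s) (deriv α s)) 0 t :=
      (hasDerivAt_const t (0 : ℝ)).congr_of_eventuallyEq hNev
    have h := hN.unique hzero
    linarith [h]
  -- formula for deriv g
  have hgd : ∀ t ∈ I, deriv g t =
      (deriv (deriv α) t 2 * (deriv α t 0 - deriv α t 1)
        - deriv α t 2 * (deriv (deriv α) t 0 - deriv (deriv α) t 1))
        / (deriv α t 0 - deriv α t 1) ^ 2 := by
    intro t ht
    have hG : HasDerivAt (fun s => deriv α s 2 / (deriv α s 0 - deriv α s 1))
        ((deriv (deriv α) t 2 * (deriv α t 0 - deriv α t 1)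
          - deriv α t 2 * (deriv (deriv α) t 0 - deriv (deriv α) t 1))
          / (deriv α t 0 - deriv α t 1) ^ 2) t :=
      (hcomp t ht 2).div ((hcomp t ht 0).sub (hcomp t ht 1)) (hξ t ht)
    have hev : g =ᶠ[nhds t] fun s => deriv α s 2 / (deriv α s 0 - deriv α s 1) :=
      Filter.eventuallyEq_of_mem (hI.mem_nhds ht) hg
    rw [hev.deriv_eq, hG.deriv]
  -- key identity: (g' · (ξ₀ - ξ₁))² = 1
  have hkey : ∀ t ∈ I, (deriv g t * (deriv α t 0 - deriv α t 1)) ^ 2 = 1 := by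
    intro t ht
    have hne := hξ t ht
    have h1 := hnull t ht
    have h2 := hc2 t ht
    have h3 := hnat t ht
    simp only [dot31] at h1 h3
    set a0 := deriv α t 0; set a1 := deriv α t 1; set a2 := deriv α t 2
    set b0 := deriv (deriv α) t 0; set b1 := deriv (deriv α) t 1
    set b2 := deriv (deriv α) t 2
    have hD : (b2 * (a0 - a1) - a2 * (b0 - b1)) ^ 2 = (a0 - a1) ^ 2 := by
      linear_combination (a0 - a1) ^ 2 * h3 + (b0 - b1) ^ 2 * h1
        - 2 * (a0 - a1) * (b0 - b1) * h2
    have hq : deriv g t * (a0 - a1) = (b2 * (a0 - a1) - a2 * (b0 - b1)) / (a0 - a1) := by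
      rw [hgd t ht]
      change (b2 * (a0 - a1) - a2 * (b0 - b1)) / (a0 - a1) ^ 2 * (a0 - a1) = _
      rw [pow_two, ← div_div, div_mul_cancel₀ _ hne]
    rw [hq, div_pow, div_eq_one_iff_eq (pow_ne_zero 2 hne)]
    linear_combination hD
  have hgne : ∀ t ∈ I, deriv g t ≠ 0 := by
    intro t ht h0
    have h := hkey t ht
    rw [h0] at h; simp at h
  -- the representation α' = f • (g²+1, g²−1, 2g)
  have hrep : ∀ t ∈ I, deriv α t = f t • ![g t ^ 2 + 1, g t ^ 2 - 1, 2 * g t] := by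
    intro t ht
    have hne := hξ t ht
    have h1 := hnull t ht
    simp only [dot31] at h1
    have e0 : deriv α t 0 = f t * (g t ^ 2 + 1) := by
      rw [hf t ht, hg t ht]; field_simp
      linear_combination (-1 : ℝ) * h1
    have e1 : deriv α t 1 = f t * (g t ^ 2 - 1) := by
      rw [hf t ht, hg t ht]; field_simp
      linear_combination (-1 : ℝ) * h1
    have e2 : deriv α t 2 = f t * (2 * g t) := by
      rw [hf t ht, hg t ht]; field_simp
    funext i
    fin_cases i <;>
      simp [e0, e1, e2]
  -- the sign ω is constant
  have hFc : ContinuousOn (fun t => deriv α t 0 - deriv α t 1) I := by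
    have h := hξC.continuousOn
    exact ((continuous_apply (0 : Fin 3)).comp_continuousOn h).sub
      ((continuous_apply (1 : Fin 3)).comp_continuousOn h)
  set F : ℝ → ℝ := fun t => deriv α t 0 - deriv α t 1 with hFdef
  have hsign : ∀ s ∈ I, ∀ u ∈ I, 0 < F s → 0 < F u := by
    intro s hs u hu hFs
    by_contra h
    push_neg at h
    have hFu : F u < 0 := lt_of_le_of_ne h (hξ u hu)
    have hsub : Set.uIcc u s ⊆ I := hIc.uIcc_subset hu hs
    have hmem : (0 : ℝ) ∈ Set.uIcc (F u) (F s) :=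
      Set.mem_uIcc.mpr (Or.inl ⟨hFu.le, hFs.le⟩)
    obtain ⟨c, hc, hc0⟩ := intermediate_value_uIcc (hFc.mono hsub) hmem
    exact hξ c (hsub hc) hc0
  set ω : ℝ := if 0 < F t₀ then 1 else -1 with hωdef
  refine ⟨hgne, ω, by rw [hωdef]; split <;> simp, ?_⟩
  intro t ht
  have hFne : F t ≠ 0 := hξ t ht
  have hFa : |F t| ≠ 0 := abs_ne_zero.mpr hFne
  have habs : |deriv g t| * |F t| = 1 := by
    rw [← abs_mul, ← Real.sqrt_sq_eq_abs, hkey t ht, Real.sqrt_one]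
  have hdg : |deriv g t| = 1 / |F t| := by
    field_simp
    linear_combination habs
  have hω : ω * |F t| = F t := by
    rw [hωdef]
    split
    next hpos =>
      have : 0 < F t := hsign t₀ ht₀ t ht hpos
      rw [abs_of_pos this]; ring
    next hpos =>
      have hneg : F t < 0 := by
        rcases lt_or_gt_of_ne hFne with h' | h'
        · exact h'
        · exact absurd (hsign t ht t₀ ht₀ h') hpos
      rw [abs_of_neg hneg]; ring
  have hfe : f t = F t / 2 := hf t ht
  have hfeq : f t = ω / (2 * |deriv g t|) := by
    have haux : ω / (2 * |deriv g t|) = ω * |F t| / 2 := by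
      rw [hdg]; field_simp
    rw [hfe, haux, hω]
  refine ⟨hfeq, ?_⟩
  rw [← hfeq]
  exact hrep t ht
end
end

section
/- Let α be a null curve in ℝ⁴₂ on an open interval I parametrized by a natural parameter, i.e., α''·α'' is constantly equal to ε ∈ {1, −1}. Let J be an open interval and φ : J → I a smooth function with φ'(s) ≠ 0 for all s ∈ J such that β = α ∘ φ also satisfies β''·β'' constantly equal to some ε' ∈ {1, −1}. Then ε' = ε and there exist σ ∈ {1, −1} and c ∈ ℝ such that φ(s) = σ·s + c for all s ∈ J; that is, a natural parameter is unique up to sign and an additive constant. -/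
noncomputable section

private lemma hasDerivAt_dot42 {f g : ℝ → Fin 4 → ℝ} {f' g' : Fin 4 → ℝ} {x : ℝ}
    (hf : HasDerivAt f f' x) (hg : HasDerivAt g g' x) :
    HasDerivAt (fun t => dot42 (f t) (g t)) (dot42 f' (g x) + dot42 (f x) g') x := by
  have hfi : ∀ i, HasDerivAt (fun t => f t i) (f' i) x := hasDerivAt_pi.1 hf
  have hgi : ∀ i, HasDerivAt (fun t => g t i) (g' i) x := hasDerivAt_pi.1 hg
  have H := ((((((hfi 0).mul (hgi 0)).neg.add ((hfi 1).mul (hgi 1))).sub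
      ((hfi 2).mul (hgi 2))).add ((hfi 3).mul (hgi 3))))
  have hv : dot42 f' (g x) + dot42 (f x) g'
      = -(f' 0 * g x 0 + f x 0 * g' 0) + (f' 1 * g x 1 + f x 1 * g' 1)
        - (f' 2 * g x 2 + f x 2 * g' 2) + (f' 3 * g x 3 + f x 3 * g' 3) := by
    simp [dot42]; ring
  rw [show (fun t => dot42 (f t) (g t))
      = fun t => -(f t 0 * g t 0) + f t 1 * g t 1 - f t 2 * g t 2 + f t 3 * g t 3
      from rfl, hv]
  exact H

private lemma dot42_expand (a b : ℝ) (v w : Fin 4 → ℝ) :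
    dot42 (a • v + b • w) (a • v + b • w)
      = a ^ 2 * dot42 v v + 2 * a * b * dot42 v w + b ^ 2 * dot42 w w := by
  simp [dot42, Pi.add_apply, Pi.smul_apply, smul_eq_mul]; ring

/-- A natural parameter of a null curve in ℝ⁴₂ is unique up to sign and an additive
constant, and the value ε ∈ {1, −1} of α''·α'' does not depend on the natural
parameter. -/
theorem stmt_14 (I J : Set ℝ) (hI : IsOpen I) (hIc : I.OrdConnected)
    (hJ : IsOpen J) (hJc : J.OrdConnected) (hJne : J.Nonempty)
    (α : ℝ → Fin 4 → ℝ) (hα : ContDiffOn ℝ (⊤ : ℕ∞) α I)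
    (hnull : ∀ t ∈ I, dot42 (deriv α t) (deriv α t) = 0)
    (ε : ℝ) (hε : ε = 1 ∨ ε = -1)
    (hnat : ∀ t ∈ I, dot42 (deriv (deriv α) t) (deriv (deriv α) t) = ε)
    (φ : ℝ → ℝ) (hφ : ContDiffOn ℝ (⊤ : ℕ∞) φ J) (hmaps : Set.MapsTo φ J I)
    (hφ' : ∀ s ∈ J, deriv φ s ≠ 0)
    (ε' : ℝ) (hε' : ε' = 1 ∨ ε' = -1)
    (hnat' : ∀ s ∈ J,
      dot42 (deriv (deriv (α ∘ φ)) s) (deriv (deriv (α ∘ φ)) s) = ε') :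
    ε' = ε ∧ ∃ σ c : ℝ, (σ = 1 ∨ σ = -1) ∧ ∀ s ∈ J, φ s = σ * s + c := by
  set α1 := deriv α with hα1def
  set α2 := deriv α1 with hα2def
  have hα1 : ContDiffOn ℝ (⊤ : ℕ∞) α1 I := hα.deriv_of_isOpen hI (by simp)
  have hα2 : ContDiffOn ℝ (⊤ : ℕ∞) α2 I := hα1.deriv_of_isOpen hI (by simp)
  have hdα : ∀ t ∈ I, HasDerivAt α (α1 t) t := fun t ht =>
    ((hα.differentiableOn (by simp) t ht).differentiableAt (hI.mem_nhds ht)).hasDerivAt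
  have hdα1 : ∀ t ∈ I, HasDerivAt α1 (α2 t) t := fun t ht =>
    ((hα1.differentiableOn (by simp) t ht).differentiableAt (hI.mem_nhds ht)).hasDerivAt
  -- orthogonality of α' and α''
  have horth : ∀ t ∈ I, dot42 (α1 t) (α2 t) = 0 := by
    intro t ht
    have hF : HasDerivAt (fun t => dot42 (α1 t) (α1 t))
        (dot42 (α2 t) (α1 t) + dot42 (α1 t) (α2 t)) t :=
      hasDerivAt_dot42 (hdα1 t ht) (hdα1 t ht)
    have hev : (fun u : ℝ => (0 : ℝ)) =ᶠ[nhds t] fun u => dot42 (α1 u) (α1 u) := by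
      filter_upwards [hI.mem_nhds ht] with u hu
      exact (hnull u hu).symm
    have h0 : HasDerivAt (fun _ : ℝ => (0 : ℝ))
        (dot42 (α2 t) (α1 t) + dot42 (α1 t) (α2 t)) t := hF.congr_of_eventuallyEq hev
    have := h0.unique (hasDerivAt_const t 0)
    have hsym : dot42 (α2 t) (α1 t) = dot42 (α1 t) (α2 t) := by simp [dot42]; ring
    linarith [this, hsym]
  set φ1 := deriv φ with hφ1def
  set φ2 := deriv φ1 with hφ2def
  have hφ1c : ContDiffOn ℝ (⊤ : ℕ∞) φ1 J := hφ.deriv_of_isOpen hJ (by simp)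
  have hdφ : ∀ s ∈ J, HasDerivAt φ (φ1 s) s := fun s hs =>
    ((hφ.differentiableOn (by simp) s hs).differentiableAt (hJ.mem_nhds hs)).hasDerivAt
  have hdφ1 : ∀ s ∈ J, HasDerivAt φ1 (φ2 s) s := fun s hs =>
    ((hφ1c.differentiableOn (by simp) s hs).differentiableAt (hJ.mem_nhds hs)).hasDerivAt
  -- second derivative of β = α ∘ φ
  have hβ2 : ∀ s ∈ J, deriv (deriv (α ∘ φ)) s
      = φ2 s • α1 (φ s) + (φ1 s * φ1 s) • α2 (φ s) := by
    intro s hs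
    have hg : ∀ u ∈ J, HasDerivAt (fun u => φ1 u • α1 (φ u))
        (φ2 u • α1 (φ u) + (φ1 u * φ1 u) • α2 (φ u)) u := by
      intro u hu
      have h1 : HasDerivAt (α1 ∘ φ) (φ1 u • α2 (φ u)) u :=
        HasDerivAt.scomp u (hdα1 (φ u) (hmaps hu)) (hdφ u hu)
      rw [show (α1 ∘ φ) = fun u => α1 (φ u) from rfl] at h1
      have := (hdφ1 u hu).smul h1
      rw [show φ2 u • α1 (φ u) + (φ1 u * φ1 u) • α2 (φ u)
          = φ1 u • φ1 u • α2 (φ u) + φ2 u • α1 (φ u) by rw [smul_smul]; abel]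
      exact this
    have hev : deriv (α ∘ φ) =ᶠ[nhds s] (fun u => φ1 u • α1 (φ u)) := by
      filter_upwards [hJ.mem_nhds hs] with u hu
      exact (HasDerivAt.scomp u (hdα (φ u) (hmaps hu)) (hdφ u hu)).deriv
    exact ((hg s hs).congr_of_eventuallyEq hev).deriv
  -- key equation
  have key : ∀ s ∈ J, (φ1 s) ^ 4 * ε = ε' := by
    intro s hs
    have h := hnat' s hs
    rw [hβ2 s hs, dot42_expand] at h
    rw [hnull _ (hmaps hs), horth _ (hmaps hs), hnat _ (hmaps hs)] at h
    rw [← h]; ring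
  obtain ⟨s₀, hs₀⟩ := hJne
  have hεε' : ε' = ε := by
    rcases hε with h1 | h1 <;> rcases hε' with h2 | h2 <;> subst h1 <;> subst h2 <;>
      first
        | rfl
        | (exfalso; have := key s₀ hs₀; nlinarith [sq_nonneg ((φ1 s₀) ^ 2), sq_nonneg (φ1 s₀)])
  -- φ1 takes values ±1
  have hpm : ∀ s ∈ J, φ1 s = 1 ∨ φ1 s = -1 := by
    intro s hs
    have h := key s hs
    rw [hεε'] at h
    have hε2 : ε * ε = 1 := by rcases hε with h1 | h1 <;> subst h1 <;> ring
    have h4 : (φ1 s) ^ 4 = 1 := by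
      have := congrArg (· * ε) h
      nlinarith [this]
    have hfac : (φ1 s - 1) * ((φ1 s + 1) * ((φ1 s) ^ 2 + 1)) = 0 := by nlinarith [h4]
    rcases mul_eq_zero.1 hfac with h0 | h0
    · left; linarith
    rcases mul_eq_zero.1 h0 with h0 | h0
    · right; linarith
    · exfalso; nlinarith [sq_nonneg (φ1 s)]
  -- φ1 is constant on J
  have hconv : Convex ℝ J := hJc.convex
  have hpre : IsPreconnected J := hconv.isPreconnected
  have hcont : ContinuousOn φ1 J := hφ1c.continuousOn
  have hconst : ∀ s ∈ J, φ1 s = φ1 s₀ := by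
    intro s hs
    by_contra hne
    have h0mem : (0 : ℝ) ∈ φ1 '' J := by
      rcases hpm s hs with h1 | h1 <;> rcases hpm s₀ hs₀ with h2 | h2
      · exact absurd (h1.trans h2.symm) hne
      · exact hpre.intermediate_value hs₀ hs hcont (by rw [h1, h2]; constructor <;> norm_num)
      · exact hpre.intermediate_value hs hs₀ hcont (by rw [h1, h2]; constructor <;> norm_num)
      · exact absurd (h1.trans h2.symm) hne
    obtain ⟨u, hu, hu0⟩ := h0mem
    exact hφ' u hu hu0
  refine ⟨hεε', φ1 s₀, φ s₀ - φ1 s₀ * s₀, hpm s₀ hs₀, ?_⟩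
  -- φ s - φ1 s₀ * s is constant on J
  intro s hs
  set ψ := fun u : ℝ => φ u - φ1 s₀ * u with hψ
  have hdψ : ∀ u ∈ J, HasDerivAt ψ 0 u := by
    intro u hu
    have := (hdφ u hu).sub ((hasDerivAt_id u).const_mul (φ1 s₀))
    rw [hconst u hu] at this
    simp at this; exact this
  have hdiff : DifferentiableOn ℝ ψ J := fun u hu =>
    ((hdψ u hu).differentiableAt.differentiableWithinAt)
  have hfd : ∀ u ∈ J, fderivWithin ℝ ψ J u = 0 := by
    intro u hu
    rw [fderivWithin_of_isOpen hJ hu, (hdψ u hu).hasFDerivAt.fderiv]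
    ext
    simp
  have := hconv.is_const_of_fderivWithin_eq_zero hdiff hfd hs hs₀
  have : φ s - φ1 s₀ * s = φ s₀ - φ1 s₀ * s₀ := this
  linarith
end
end

section
/- Let I₁, I₂ be open intervals, let f₁, g₁ : I₁ → ℝ and f₂, g₂ : I₂ → ℝ be smooth functions with f₁ and f₂ nowhere zero and g₁(t₁) ≠ g₂(t₂) for all (t₁, t₂) ∈ I₁ × I₂, and let α₁, α₂ be smooth curves in ℝ³ with αᵢ' = fᵢ·(gᵢ² + 1, gᵢ² − 1, 2gᵢ) for i = 1, 2. Define x : I₁ × I₂ → ℝ³ by x(t₁, t₂) = (α₁(t₁) + α₂(t₂))/2. Then, with respect to the scalar product of ℝ³₁: (∂x/∂t₁)·(∂x/∂t₁) = 0, (∂x/∂t₂)·(∂x/∂t₂) = 0, (∂x/∂t₁)·(∂x/∂t₂) = −(1/2)·f₁(t₁)·f₂(t₂)·(g₁(t₁) − g₂(t₂))² ≠ 0, and ∂²x/∂t₁∂t₂ = 0 at every point of I₁ × I₂; hence x is a minimal Lorentz surface in ℝ³₁ parametrized by isotropic coordinates. -/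
noncomputable section

/-- The map x(t₁,t₂) = (α₁(t₁)+α₂(t₂))/2 built from two null curves in ℝ³₁ with
Weierstrass data (f₁,g₁), (f₂,g₂) and g₁(t₁) ≠ g₂(t₂) is a minimal Lorentz surface in
ℝ³₁ in isotropic coordinates: both coordinate vector fields are lightlike,
F = −(1/2)f₁f₂(g₁−g₂)² ≠ 0, and the mixed second derivative vanishes. -/
theorem stmt_15 (I₁ I₂ : Set ℝ)
    (hI₁ : IsOpen I₁) (hI₁c : I₁.OrdConnected)
    (hI₂ : IsOpen I₂) (hI₂c : I₂.OrdConnected)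
    (f₁ g₁ f₂ g₂ : ℝ → ℝ)
    (hf₁ : ContDiffOn ℝ (⊤ : ℕ∞) f₁ I₁) (hg₁ : ContDiffOn ℝ (⊤ : ℕ∞) g₁ I₁)
    (hf₂ : ContDiffOn ℝ (⊤ : ℕ∞) f₂ I₂) (hg₂ : ContDiffOn ℝ (⊤ : ℕ∞) g₂ I₂)
    (hf₁0 : ∀ t ∈ I₁, f₁ t ≠ 0) (hf₂0 : ∀ t ∈ I₂, f₂ t ≠ 0)
    (hgg : ∀ t₁ ∈ I₁, ∀ t₂ ∈ I₂, g₁ t₁ ≠ g₂ t₂)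
    (α₁ α₂ : ℝ → Fin 3 → ℝ)
    (hα₁ : ContDiffOn ℝ (⊤ : ℕ∞) α₁ I₁) (hα₂ : ContDiffOn ℝ (⊤ : ℕ∞) α₂ I₂)
    (hrep₁ : ∀ t ∈ I₁, deriv α₁ t = f₁ t • ![g₁ t ^ 2 + 1, g₁ t ^ 2 - 1, 2 * g₁ t])
    (hrep₂ : ∀ t ∈ I₂, deriv α₂ t = f₂ t • ![g₂ t ^ 2 + 1, g₂ t ^ 2 - 1, 2 * g₂ t])
    (x : ℝ → ℝ → Fin 3 → ℝ)
    (hx : ∀ t₁ t₂, x t₁ t₂ = (1 / 2 : ℝ) • (α₁ t₁ + α₂ t₂)) :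
    ∀ t₁ ∈ I₁, ∀ t₂ ∈ I₂,
      dot31 (deriv (fun s => x s t₂) t₁) (deriv (fun s => x s t₂) t₁) = 0 ∧
      dot31 (deriv (x t₁) t₂) (deriv (x t₁) t₂) = 0 ∧
      (dot31 (deriv (fun s => x s t₂) t₁) (deriv (x t₁) t₂) =
        -(1 / 2) * f₁ t₁ * f₂ t₂ * (g₁ t₁ - g₂ t₂) ^ 2 ∧
       dot31 (deriv (fun s => x s t₂) t₁) (deriv (x t₁) t₂) ≠ 0) ∧
      deriv (fun s => deriv (fun u => x u s) t₁) t₂ = 0 := by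
  intro t₁ ht₁ t₂ ht₂
  have hd₁ : DifferentiableAt ℝ α₁ t₁ :=
    ((hα₁.differentiableOn (by simp)) t₁ ht₁).differentiableAt (hI₁.mem_nhds ht₁)
  have hd₂ : DifferentiableAt ℝ α₂ t₂ :=
    ((hα₂.differentiableOn (by simp)) t₂ ht₂).differentiableAt (hI₂.mem_nhds ht₂)
  have hmix : ∀ s : ℝ, deriv (fun u => x u s) t₁ = (1 / 2 : ℝ) • deriv α₁ t₁ := by
    intro s
    have he : (fun u => x u s) = fun u => (1 / 2 : ℝ) • (α₁ u + α₂ s) :=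
      funext fun u => hx u s
    rw [he, deriv_fun_const_smul _ (hd₁.add_const _), deriv_add_const]
  have h1 : deriv (fun s => x s t₂) t₁ = (1 / 2 : ℝ) • deriv α₁ t₁ := hmix t₂
  have h2 : deriv (x t₁) t₂ = (1 / 2 : ℝ) • deriv α₂ t₂ := by
    have he : x t₁ = fun s => (1 / 2 : ℝ) • (α₁ t₁ + α₂ s) := funext fun s => hx t₁ s
    rw [he, deriv_fun_const_smul _ (hd₂.const_add _), deriv_const_add]
  have h4 : deriv (fun s => deriv (fun u => x u s) t₁) t₂ = 0 := by
    have he : (fun s => deriv (fun u => x u s) t₁) = fun _ => (1 / 2 : ℝ) • deriv α₁ t₁ :=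
      funext fun s => hmix s
    rw [he, deriv_const]
  have hF : dot31 (deriv (fun s => x s t₂) t₁) (deriv (x t₁) t₂) =
      -(1 / 2) * f₁ t₁ * f₂ t₂ * (g₁ t₁ - g₂ t₂) ^ 2 := by
    simp only [dot31, h1, h2, hrep₁ t₁ ht₁, hrep₂ t₂ ht₂, Pi.smul_apply, smul_eq_mul,
      Matrix.cons_val_zero, Matrix.cons_val_one, Matrix.head_cons, Matrix.cons_val_two,
      Matrix.tail_cons]
    ring
  refine ⟨?_, ?_, ⟨hF, ?_⟩, h4⟩
  · simp only [dot31, h1, hrep₁ t₁ ht₁, Pi.smul_apply, smul_eq_mul,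
      Matrix.cons_val_zero, Matrix.cons_val_one, Matrix.head_cons, Matrix.cons_val_two,
      Matrix.tail_cons]
    ring
  · simp only [dot31, h2, hrep₂ t₂ ht₂, Pi.smul_apply, smul_eq_mul,
      Matrix.cons_val_zero, Matrix.cons_val_one, Matrix.head_cons, Matrix.cons_val_two,
      Matrix.tail_cons]
    ring
  · rw [hF]
    have := hf₁0 t₁ ht₁
    have := hf₂0 t₂ ht₂
    have hg := sub_ne_zero_of_ne (hgg t₁ ht₁ t₂ ht₂)
    positivity
end
end

section
/- Let I₁, I₂ be open intervals, let f₁, g₁, h₁ : I₁ → ℝ and f₂, g₂, h₂ : I₂ → ℝ be smooth functions with f₁ and f₂ nowhere zero, g₁(t₁) ≠ g₂(t₂) and h₁(t₁) ≠ h₂(t₂) for all (t₁, t₂) ∈ I₁ × I₂, and let α₁, α₂ be smooth curves in ℝ⁴ with αᵢ' = fᵢ·(gᵢhᵢ + 1, gᵢhᵢ − 1, hᵢ − gᵢ, hᵢ + gᵢ) for i = 1, 2. Define x : I₁ × I₂ → ℝ⁴ by x(t₁, t₂) = (α₁(t₁) + α₂(t₂))/2. Then, with respect to the scalar product of ℝ⁴₂: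 (∂x/∂t₁)·(∂x/∂t₁) = 0, (∂x/∂t₂)·(∂x/∂t₂) = 0, (∂x/∂t₁)·(∂x/∂t₂) = −(1/2)·f₁(t₁)·f₂(t₂)·(g₁(t₁) − g₂(t₂))·(h₁(t₁) − h₂(t₂)) ≠ 0, and ∂²x/∂t₁∂t₂ = 0 at every point of I₁ × I₂; hence x is a minimal Lorentz surface in ℝ⁴₂ parametrized by isotropic coordinates. -/
noncomputable section

/-- The map x(t₁,t₂) = (α₁(t₁)+α₂(t₂))/2 built from two null curves in ℝ⁴₂ with
Weierstrass data (f₁,g₁,h₁), (f₂,g₂,h₂), g₁(t₁) ≠ g₂(t₂) and h₁(t₁) ≠ h₂(t₂), is a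
minimal Lorentz surface in ℝ⁴₂ in isotropic coordinates: both coordinate vector fields
are lightlike, F = −(1/2)f₁f₂(g₁−g₂)(h₁−h₂) ≠ 0, and the mixed second derivative
vanishes. -/
theorem stmt_16 (I₁ I₂ : Set ℝ)
    (hI₁ : IsOpen I₁) (hI₁c : I₁.OrdConnected)
    (hI₂ : IsOpen I₂) (hI₂c : I₂.OrdConnected)
    (f₁ g₁ h₁ f₂ g₂ h₂ : ℝ → ℝ)
    (hf₁ : ContDiffOn ℝ (⊤ : ℕ∞) f₁ I₁) (hg₁ : ContDiffOn ℝ (⊤ : ℕ∞) g₁ I₁)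
    (hh₁ : ContDiffOn ℝ (⊤ : ℕ∞) h₁ I₁)
    (hf₂ : ContDiffOn ℝ (⊤ : ℕ∞) f₂ I₂) (hg₂ : ContDiffOn ℝ (⊤ : ℕ∞) g₂ I₂)
    (hh₂ : ContDiffOn ℝ (⊤ : ℕ∞) h₂ I₂)
    (hf₁0 : ∀ t ∈ I₁, f₁ t ≠ 0) (hf₂0 : ∀ t ∈ I₂, f₂ t ≠ 0)
    (hgg : ∀ t₁ ∈ I₁, ∀ t₂ ∈ I₂, g₁ t₁ ≠ g₂ t₂)
    (hhh : ∀ t₁ ∈ I₁, ∀ t₂ ∈ I₂, h₁ t₁ ≠ h₂ t₂)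
    (α₁ α₂ : ℝ → Fin 4 → ℝ)
    (hα₁ : ContDiffOn ℝ (⊤ : ℕ∞) α₁ I₁) (hα₂ : ContDiffOn ℝ (⊤ : ℕ∞) α₂ I₂)
    (hrep₁ : ∀ t ∈ I₁, deriv α₁ t = f₁ t •
      ![g₁ t * h₁ t + 1, g₁ t * h₁ t - 1, h₁ t - g₁ t, h₁ t + g₁ t])
    (hrep₂ : ∀ t ∈ I₂, deriv α₂ t = f₂ t •
      ![g₂ t * h₂ t + 1, g₂ t * h₂ t - 1, h₂ t - g₂ t, h₂ t + g₂ t])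
    (x : ℝ → ℝ → Fin 4 → ℝ)
    (hx : ∀ t₁ t₂, x t₁ t₂ = (1 / 2 : ℝ) • (α₁ t₁ + α₂ t₂)) :
    ∀ t₁ ∈ I₁, ∀ t₂ ∈ I₂,
      dot42 (deriv (fun s => x s t₂) t₁) (deriv (fun s => x s t₂) t₁) = 0 ∧
      dot42 (deriv (x t₁) t₂) (deriv (x t₁) t₂) = 0 ∧
      (dot42 (deriv (fun s => x s t₂) t₁) (deriv (x t₁) t₂) =
        -(1 / 2) * f₁ t₁ * f₂ t₂ * (g₁ t₁ - g₂ t₂) * (h₁ t₁ - h₂ t₂) ∧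
       dot42 (deriv (fun s => x s t₂) t₁) (deriv (x t₁) t₂) ≠ 0) ∧
      deriv (fun s => deriv (fun u => x u s) t₁) t₂ = 0 := by
  intro t₁ ht₁ t₂ ht₂
  have hd₁ : DifferentiableAt ℝ α₁ t₁ :=
    (hα₁.contDiffAt (hI₁.mem_nhds ht₁)).differentiableAt (by simp)
  have hd₂ : DifferentiableAt ℝ α₂ t₂ :=
    (hα₂.contDiffAt (hI₂.mem_nhds ht₂)).differentiableAt (by simp)
  have key1 : ∀ s, deriv (fun u => x u s) t₁ = (1 / 2 : ℝ) • deriv α₁ t₁ := by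
    intro s
    have h : HasDerivAt (fun u => x u s) ((1 / 2 : ℝ) • deriv α₁ t₁) t₁ := by
      have := ((hd₁.hasDerivAt.add_const (α₂ s)).const_smul (1 / 2 : ℝ))
      rw [show (fun u => x u s) = fun u => (1 / 2 : ℝ) • (α₁ u + α₂ s) from funext fun u => hx u s]
      exact this
    exact h.deriv
  have key2 : deriv (x t₁) t₂ = (1 / 2 : ℝ) • deriv α₂ t₂ := by
    have hxf : x t₁ = fun s => (1 / 2 : ℝ) • (α₁ t₁ + α₂ s) := funext (hx t₁)
    have h : HasDerivAt (x t₁) ((1 / 2 : ℝ) • deriv α₂ t₂) t₂ := by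
      rw [hxf]
      exact (hd₂.hasDerivAt.const_add (α₁ t₁)).const_smul (1 / 2 : ℝ)
    exact h.deriv
  have e1 : deriv (fun s => x s t₂) t₁ = (1 / 2 : ℝ) • (f₁ t₁ •
      ![g₁ t₁ * h₁ t₁ + 1, g₁ t₁ * h₁ t₁ - 1, h₁ t₁ - g₁ t₁, h₁ t₁ + g₁ t₁]) := by
    rw [key1 t₂, hrep₁ t₁ ht₁]
  have e2 : deriv (x t₁) t₂ = (1 / 2 : ℝ) • (f₂ t₂ •
      ![g₂ t₂ * h₂ t₂ + 1, g₂ t₂ * h₂ t₂ - 1, h₂ t₂ - g₂ t₂, h₂ t₂ + g₂ t₂]) := by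
    rw [key2, hrep₂ t₂ ht₂]
  have hF : dot42 (deriv (fun s => x s t₂) t₁) (deriv (x t₁) t₂) =
      -(1 / 2) * f₁ t₁ * f₂ t₂ * (g₁ t₁ - g₂ t₂) * (h₁ t₁ - h₂ t₂) := by
    rw [e1, e2]
    simp only [dot42, Pi.smul_apply, smul_eq_mul, Matrix.cons_val_zero,
      Matrix.cons_val_one, Matrix.head_cons, Matrix.cons_val_two, Matrix.tail_cons,
      Matrix.cons_val_three]
    ring
  refine ⟨?_, ?_, ⟨hF, ?_⟩, ?_⟩
  · rw [e1]
    simp only [dot42, Pi.smul_apply, smul_eq_mul, Matrix.cons_val_zero,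
      Matrix.cons_val_one, Matrix.head_cons, Matrix.cons_val_two, Matrix.tail_cons,
      Matrix.cons_val_three]
    ring
  · rw [e2]
    simp only [dot42, Pi.smul_apply, smul_eq_mul, Matrix.cons_val_zero,
      Matrix.cons_val_one, Matrix.head_cons, Matrix.cons_val_two, Matrix.tail_cons,
      Matrix.cons_val_three]
    ring
  · rw [hF]
    have := hf₁0 t₁ ht₁; have := hf₂0 t₂ ht₂
    have := sub_ne_zero.mpr (hgg t₁ ht₁ t₂ ht₂)
    have := sub_ne_zero.mpr (hhh t₁ ht₁ t₂ ht₂)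
    positivity
  · have : (fun s => deriv (fun u => x u s) t₁) = fun _ => (1 / 2 : ℝ) • deriv α₁ t₁ :=
      funext key1
    rw [this, deriv_const]
end
end

section
/- Let I₁, I₂ be open intervals, let g₁, h₁ : I₁ → ℝ and g₂, h₂ : I₂ → ℝ be smooth functions with g₁'(t₁)·h₁'(t₁) ≠ 0 and g₂'(t₂)·h₂'(t₂) ≠ 0 everywhere, and let ω₁, ω₂ ∈ {1, −1}. Let α₁, α₂ be smooth curves in ℝ⁴ with αᵢ' = (ωᵢ/(2·√(|gᵢ'hᵢ'|)))·(gᵢhᵢ + 1, gᵢhᵢ − 1, hᵢ − gᵢ, hᵢ + gᵢ), and set x(t₁, t₂) = (α₁(t₁) + α₂(t₂))/2. Then the coefficient F = (∂x/∂t₁)·(∂x/∂t₂) of the first fundamental form, computed with the scalar product of ℝ⁴₂, equals F(t₁, t₂) = −ω₁·ω₂·(g₁(t₁) − g₂(t₂))·(h₁(t₁) − h₂(t₂)) / (8·√(|g₁'(t₁)·h₁'(t₁)·g₂'(t₂)·h₂'(t₂)|)). -/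
noncomputable section

/-- For a minimal Lorentz surface in ℝ⁴₂ given by the canonical Weierstrass-type
representation with data (g₁,h₁,ω₁), (g₂,h₂,ω₂), the coefficient
F = (∂x/∂t₁)·(∂x/∂t₂) of the first fundamental form equals
−ω₁ω₂(g₁−g₂)(h₁−h₂)/(8√|g₁'h₁'g₂'h₂'|). -/
theorem stmt_17 (I₁ I₂ : Set ℝ)
    (hI₁ : IsOpen I₁) (hI₁c : I₁.OrdConnected)
    (hI₂ : IsOpen I₂) (hI₂c : I₂.OrdConnected)
    (g₁ h₁ g₂ h₂ : ℝ → ℝ)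
    (hg₁ : ContDiffOn ℝ (⊤ : ℕ∞) g₁ I₁) (hh₁ : ContDiffOn ℝ (⊤ : ℕ∞) h₁ I₁)
    (hg₂ : ContDiffOn ℝ (⊤ : ℕ∞) g₂ I₂) (hh₂ : ContDiffOn ℝ (⊤ : ℕ∞) h₂ I₂)
    (hgh₁ : ∀ t ∈ I₁, deriv g₁ t * deriv h₁ t ≠ 0)
    (hgh₂ : ∀ t ∈ I₂, deriv g₂ t * deriv h₂ t ≠ 0)
    (ω₁ ω₂ : ℝ) (hω₁ : ω₁ = 1 ∨ ω₁ = -1) (hω₂ : ω₂ = 1 ∨ ω₂ = -1)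
    (α₁ α₂ : ℝ → Fin 4 → ℝ)
    (hα₁ : ContDiffOn ℝ (⊤ : ℕ∞) α₁ I₁) (hα₂ : ContDiffOn ℝ (⊤ : ℕ∞) α₂ I₂)
    (hrep₁ : ∀ t ∈ I₁, deriv α₁ t =
      (ω₁ / (2 * Real.sqrt |deriv g₁ t * deriv h₁ t|)) •
      ![g₁ t * h₁ t + 1, g₁ t * h₁ t - 1, h₁ t - g₁ t, h₁ t + g₁ t])
    (hrep₂ : ∀ t ∈ I₂, deriv α₂ t =
      (ω₂ / (2 * Real.sqrt |deriv g₂ t * deriv h₂ t|)) •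
      ![g₂ t * h₂ t + 1, g₂ t * h₂ t - 1, h₂ t - g₂ t, h₂ t + g₂ t])
    (x : ℝ → ℝ → Fin 4 → ℝ)
    (hx : ∀ t₁ t₂, x t₁ t₂ = (1 / 2 : ℝ) • (α₁ t₁ + α₂ t₂)) :
    ∀ t₁ ∈ I₁, ∀ t₂ ∈ I₂,
      dot42 (deriv (fun s => x s t₂) t₁) (deriv (x t₁) t₂) =
        -(ω₁ * ω₂ * (g₁ t₁ - g₂ t₂) * (h₁ t₁ - h₂ t₂)) /
          (8 * Real.sqrt |deriv g₁ t₁ * deriv h₁ t₁ * deriv g₂ t₂ * deriv h₂ t₂|) := by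

  intro t₁ ht₁ t₂ ht₂
  have hd₁ : DifferentiableAt ℝ α₁ t₁ :=
    (hα₁.contDiffAt (hI₁.mem_nhds ht₁)).differentiableAt (by simp)
  have hd₂ : DifferentiableAt ℝ α₂ t₂ :=
    (hα₂.contDiffAt (hI₂.mem_nhds ht₂)).differentiableAt (by simp)
  have e₁ : deriv (fun s => x s t₂) t₁ = (1 / 2 : ℝ) • deriv α₁ t₁ := by
    have : (fun s => x s t₂) = fun s => (1 / 2 : ℝ) • (α₁ s + α₂ t₂) := by
      funext s; exact hx s t₂
    rw [this]
    rw [deriv_fun_const_smul _ (hd₁.add_const _)]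
    congr 1
    exact deriv_add_const _
  have e₂ : deriv (x t₁) t₂ = (1 / 2 : ℝ) • deriv α₂ t₂ := by
    have : x t₁ = fun s => (1 / 2 : ℝ) • (α₁ t₁ + α₂ s) := by
      funext s; exact hx t₁ s
    rw [this]
    rw [deriv_fun_const_smul _ (hd₂.const_add _)]
    congr 1
    exact deriv_const_add _
  rw [e₁, e₂, hrep₁ t₁ ht₁, hrep₂ t₂ ht₂]
  set D₁ := deriv g₁ t₁ * deriv h₁ t₁ with hD₁
  set D₂ := deriv g₂ t₂ * deriv h₂ t₂ with hD₂
  have hs₁ : Real.sqrt |D₁| > 0 := Real.sqrt_pos.2 (abs_pos.2 (hgh₁ t₁ ht₁))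
  have hs₂ : Real.sqrt |D₂| > 0 := Real.sqrt_pos.2 (abs_pos.2 (hgh₂ t₂ ht₂))
  have hsq : Real.sqrt |deriv g₁ t₁ * deriv h₁ t₁ * deriv g₂ t₂ * deriv h₂ t₂| =
      Real.sqrt |D₁| * Real.sqrt |D₂| := by
    rw [← Real.sqrt_mul (abs_nonneg _), ← abs_mul, hD₁, hD₂]
    ring_nf
  rw [hsq]
  simp only [dot42, Pi.smul_apply, smul_eq_mul, Matrix.cons_val_zero, Matrix.cons_val_one,
    Matrix.head_cons, Matrix.cons_val_two, Matrix.tail_cons, Matrix.cons_val_three]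
  field_simp
  ring
end
end

section
/- Let I₁, I₂ be open intervals and g₁, h₁ : I₁ → ℝ, g₂, h₂ : I₂ → ℝ differentiable functions such that for all (t₁, t₂) ∈ I₁ × I₂: g₁(t₁) ≠ g₂(t₂), h₁(t₁) ≠ h₂(t₂), and suppose at a point (t₁, t₂) the products g₁'(t₁)·g₂'(t₂) and h₁'(t₁)·h₂'(t₂) are both nonzero and have the same sign η ∈ {1, −1}. Define, at (t₁, t₂): K = (8·√(|g₁'h₁'g₂'h₂'|)/|(g₁ − g₂)(h₁ − h₂)|)·(g₁'g₂'/(g₁ − g₂)² + h₁'h₂'/(h₁ − h₂)²), κ = (8·√(|g₁'h₁'g₂'h₂'|)/|(g₁ − g₂)(h₁ − h₂)|)·(g₁'g₂'/(g₁ − g₂)² − h₁'h₂'/(h₁ − h₂)²), A = 4·|g₁'g₂'|/(g₁ − g₂)², B = 4·|h₁'h₂'|/(h₁ − h₂)². Then K = η·√(A·B)·(A + B)/2 and κ = η·√(A·B)·(A − B)/2; in particular the sign of K equals η. -/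
/-! Put `a = g₁'g₂'`, `b = h₁'h₂'`, `p = g₁ - g₂`, `q = h₁ - h₂`. Since `a` and `b` have sign `η`,
`a / p² = η A / 4` and `b / q² = η B / 4`, while `√(AB) = 4 √|ab| / |pq|`, so the common prefactor
of `K` and `κ` is `2 √(AB)`. Both identities then follow by expanding, and `K` has the sign of `η`
because `√(AB) (A + B) > 0`. -/

namespace Real

theorem sign_mul_abs (r : ℝ) : sign r * |r| = r := by
  rcases lt_trichotomy r 0 with hr | rfl | hr
  · rw [sign_of_neg hr, abs_of_neg hr, neg_one_mul, neg_neg]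
  · rw [abs_zero, mul_zero]
  · rw [sign_of_pos hr, abs_of_pos hr, one_mul]

theorem sign_sign (r : ℝ) : sign (sign r) = sign r := by
  rcases sign_apply_eq r with h | h | h <;> rw [h]
  · rw [sign_neg, sign_one]
  · exact sign_zero
  · exact sign_one

theorem sign_mul_of_pos {r c : ℝ} (hc : 0 < c) : sign (r * c) = sign r := by
  rcases lt_trichotomy r 0 with hr | rfl | hr
  · rw [sign_of_neg hr, sign_of_neg (mul_neg_of_neg_of_pos hr hc)]
  · rw [zero_mul]
  · rw [sign_of_pos hr, sign_of_pos (mul_pos hr hc)]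

end Real

theorem div_sq_eq_sign_mul (a p : ℝ) : a / p ^ 2 = Real.sign a * (4 * |a| / p ^ 2) / 4 := by
  nth_rw 1 [← Real.sign_mul_abs a]
  ring

theorem sqrt_mul_four_mul_abs_div_sq (a b p q : ℝ) :
    √(4 * |a| / p ^ 2 * (4 * |b| / q ^ 2)) = 4 * √|a * b| / |p * q| := by
  have h : 4 * |a| / p ^ 2 * (4 * |b| / q ^ 2) = 4 ^ 2 * |a * b| / |p * q| ^ 2 := by
    rw [abs_mul, sq_abs (p * q)]
    ring
  rw [h, Real.sqrt_div' _ (sq_nonneg _), Real.sqrt_mul' _ (abs_nonneg _),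
    Real.sqrt_sq (by norm_num), Real.sqrt_sq (abs_nonneg _)]

theorem four_mul_abs_div_sq_pos {a p : ℝ} (ha : a ≠ 0) (hp : p ≠ 0) : 0 < 4 * |a| / p ^ 2 := by
  positivity

theorem stmt_18_general (I₁ I₂ : Set ℝ)
    (g₁ h₁ g₂ h₂ : ℝ → ℝ)
    (hgg : ∀ t₁ ∈ I₁, ∀ t₂ ∈ I₂, g₁ t₁ ≠ g₂ t₂)
    (hhh : ∀ t₁ ∈ I₁, ∀ t₂ ∈ I₂, h₁ t₁ ≠ h₂ t₂)
    (t₁ t₂ : ℝ) (ht₁ : t₁ ∈ I₁) (ht₂ : t₂ ∈ I₂)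
    (hg' : deriv g₁ t₁ * deriv g₂ t₂ ≠ 0)
    (hh' : deriv h₁ t₁ * deriv h₂ t₂ ≠ 0)
    (η : ℝ)
    (hsg : Real.sign (deriv g₁ t₁ * deriv g₂ t₂) = η)
    (hsh : Real.sign (deriv h₁ t₁ * deriv h₂ t₂) = η)
    (K κ A B : ℝ)
    (hK : K = 8 * Real.sqrt |deriv g₁ t₁ * deriv h₁ t₁ * deriv g₂ t₂ * deriv h₂ t₂| /
        |(g₁ t₁ - g₂ t₂) * (h₁ t₁ - h₂ t₂)| *
        (deriv g₁ t₁ * deriv g₂ t₂ / (g₁ t₁ - g₂ t₂) ^ 2 +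
         deriv h₁ t₁ * deriv h₂ t₂ / (h₁ t₁ - h₂ t₂) ^ 2))
    (hκ : κ = 8 * Real.sqrt |deriv g₁ t₁ * deriv h₁ t₁ * deriv g₂ t₂ * deriv h₂ t₂| /
        |(g₁ t₁ - g₂ t₂) * (h₁ t₁ - h₂ t₂)| *
        (deriv g₁ t₁ * deriv g₂ t₂ / (g₁ t₁ - g₂ t₂) ^ 2 -
         deriv h₁ t₁ * deriv h₂ t₂ / (h₁ t₁ - h₂ t₂) ^ 2))
    (hA : A = 4 * |deriv g₁ t₁ * deriv g₂ t₂| / (g₁ t₁ - g₂ t₂) ^ 2)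
    (hB : B = 4 * |deriv h₁ t₁ * deriv h₂ t₂| / (h₁ t₁ - h₂ t₂) ^ 2) :
    K = η * Real.sqrt (A * B) * (A + B) / 2 ∧
    κ = η * Real.sqrt (A * B) * (A - B) / 2 ∧
    Real.sign K = η := by
  have hprefactor : 8 * √|deriv g₁ t₁ * deriv h₁ t₁ * deriv g₂ t₂ * deriv h₂ t₂| /
      |(g₁ t₁ - g₂ t₂) * (h₁ t₁ - h₂ t₂)| = 2 * √(A * B) := by
    rw [hA, hB, sqrt_mul_four_mul_abs_div_sq, mul_right_comm (deriv g₁ t₁), ← mul_assoc]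
    ring
  have hgA : deriv g₁ t₁ * deriv g₂ t₂ / (g₁ t₁ - g₂ t₂) ^ 2 = η * A / 4 := by
    rw [hA, ← hsg, div_sq_eq_sign_mul]
  have hhB : deriv h₁ t₁ * deriv h₂ t₂ / (h₁ t₁ - h₂ t₂) ^ 2 = η * B / 4 := by
    rw [hB, ← hsh, div_sq_eq_sign_mul]
  have hK' : K = η * √(A * B) * (A + B) / 2 := by rw [hK, hprefactor, hgA, hhB]; ring
  refine ⟨hK', by rw [hκ, hprefactor, hgA, hhB]; ring, ?_⟩
  have hA₀ : 0 < A := hA ▸ four_mul_abs_div_sq_pos hg' (sub_ne_zero.2 (hgg t₁ ht₁ t₂ ht₂))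
  have hB₀ : 0 < B := hB ▸ four_mul_abs_div_sq_pos hh' (sub_ne_zero.2 (hhh t₁ ht₁ t₂ ht₂))
  calc Real.sign K = Real.sign (η * (√(A * B) * (A + B) / 2)) := by rw [hK']; ring_nf
    _ = Real.sign η := Real.sign_mul_of_pos (by positivity)
    _ = η := hsg ▸ Real.sign_sign _

/-- For a minimal Lorentz surface of first or second type in ℝ⁴₂ (canonical Weierstrass
data g₁,h₁,g₂,h₂ with g₁'g₂' and h₁'h₂' nonzero of the same sign η), the Gauss curvature
K and normal curvature κ are expressed through A = √|K_g| and B = √|K_h| as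
K = η√(AB)(A+B)/2 and κ = η√(AB)(A−B)/2; in particular sign K = η. -/
theorem stmt_18 (I₁ I₂ : Set ℝ) (hI₁ : IsOpen I₁) (hI₂ : IsOpen I₂)
    (g₁ h₁ g₂ h₂ : ℝ → ℝ)
    (hg₁ : DifferentiableOn ℝ g₁ I₁) (hh₁ : DifferentiableOn ℝ h₁ I₁)
    (hg₂ : DifferentiableOn ℝ g₂ I₂) (hh₂ : DifferentiableOn ℝ h₂ I₂)
    (hgg : ∀ t₁ ∈ I₁, ∀ t₂ ∈ I₂, g₁ t₁ ≠ g₂ t₂)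
    (hhh : ∀ t₁ ∈ I₁, ∀ t₂ ∈ I₂, h₁ t₁ ≠ h₂ t₂)
    (t₁ t₂ : ℝ) (ht₁ : t₁ ∈ I₁) (ht₂ : t₂ ∈ I₂)
    (hg' : deriv g₁ t₁ * deriv g₂ t₂ ≠ 0)
    (hh' : deriv h₁ t₁ * deriv h₂ t₂ ≠ 0)
    (η : ℝ) (hη : η = 1 ∨ η = -1)
    (hsg : Real.sign (deriv g₁ t₁ * deriv g₂ t₂) = η)
    (hsh : Real.sign (deriv h₁ t₁ * deriv h₂ t₂) = η)
    (K κ A B : ℝ)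
    (hK : K = 8 * Real.sqrt |deriv g₁ t₁ * deriv h₁ t₁ * deriv g₂ t₂ * deriv h₂ t₂| /
        |(g₁ t₁ - g₂ t₂) * (h₁ t₁ - h₂ t₂)| *
        (deriv g₁ t₁ * deriv g₂ t₂ / (g₁ t₁ - g₂ t₂) ^ 2 +
         deriv h₁ t₁ * deriv h₂ t₂ / (h₁ t₁ - h₂ t₂) ^ 2))
    (hκ : κ = 8 * Real.sqrt |deriv g₁ t₁ * deriv h₁ t₁ * deriv g₂ t₂ * deriv h₂ t₂| /
        |(g₁ t₁ - g₂ t₂) * (h₁ t₁ - h₂ t₂)| *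
        (deriv g₁ t₁ * deriv g₂ t₂ / (g₁ t₁ - g₂ t₂) ^ 2 -
         deriv h₁ t₁ * deriv h₂ t₂ / (h₁ t₁ - h₂ t₂) ^ 2))
    (hA : A = 4 * |deriv g₁ t₁ * deriv g₂ t₂| / (g₁ t₁ - g₂ t₂) ^ 2)
    (hB : B = 4 * |deriv h₁ t₁ * deriv h₂ t₂| / (h₁ t₁ - h₂ t₂) ^ 2) :
    K = η * Real.sqrt (A * B) * (A + B) / 2 ∧
    κ = η * Real.sqrt (A * B) * (A - B) / 2 ∧
    Real.sign K = η :=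
  stmt_18_general I₁ I₂ g₁ h₁ g₂ h₂ hgg hhh t₁ t₂ ht₁ ht₂ hg' hh' η hsg hsh K κ A B hK hκ hA hB
end
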